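/- arXiv:1509.03990 — 9 statements merged into one kernel-verified Lean document; each statement's English description precedes it below -/
import Mathlib

section
/- For every finite simple graph G, the vertex cover number satisfies OPT(G) ≥ 2·LP(G) − MM(G). -/
open scoped Classical

/-- A fractional vertex cover of `G`. -/
def IsFVC {V : Type} (G : SimpleGraph V) (x : V → ℝ) : Prop :=
  (∀ v, 0 ≤ x v ∧ x v ≤ 1) ∧ ∀ ⦃u v⦄, G.Adj u v → 1 ≤ x u + x v

/-- The weight of a fractional vertex cover. -/
noncomputable def fvcWeight {V : Type} [Fintype V] (x : V → ℝ) : ℝ := ∑ v, x v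

/-- `LP(G)`: the minimum weight of a fractional vertex cover of `G`. -/
noncomputable def LPopt {V : Type} [Fintype V] (G : SimpleGraph V) : ℝ :=
  sInf {w : ℝ | ∃ x : V → ℝ, IsFVC G x ∧ w = fvcWeight x}

/-- A matching of `G`: a set of pairwise vertex-disjoint edges of `G`. -/
def IsMatchingSet {V : Type} (G : SimpleGraph V) (M : Finset (Sym2 V)) : Prop :=
  (∀ e ∈ M, e ∈ G.edgeSet) ∧ ∀ e ∈ M, ∀ f ∈ M, e ≠ f → ∀ v : V, v ∈ e → v ∉ f

/-- `MM(G)`: the maximum size of a matching of `G`. -/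
noncomputable def MMnum {V : Type} (G : SimpleGraph V) : ℕ :=
  sSup {n : ℕ | ∃ M : Finset (Sym2 V), IsMatchingSet G M ∧ M.card = n}

/-- `OPT(G)`: the minimum size of a vertex cover of `G`. -/
noncomputable def VCnum {V : Type} (G : SimpleGraph V) : ℕ :=
  sInf {n : ℕ | ∃ S : Finset V, (∀ ⦃u v⦄, G.Adj u v → u ∈ S ∨ v ∈ S) ∧ S.card = n}

/-- `N(X)`: the set of vertices outside `X` having a neighbour in `X`. -/
def nbhd {V : Type} (G : SimpleGraph V) (X : Set V) : Set V :=
  {v | v ∉ X ∧ ∃ u ∈ X, G.Adj u v}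

/-- `X` is an independent set in `G`. -/
def IndepSet {V : Type} (G : SimpleGraph V) (X : Set V) : Prop :=
  ∀ u ∈ X, ∀ v ∈ X, ¬ G.Adj u v

/-- `surplus(G) ≥ s`: every nonempty independent set `X` satisfies `|N(X)| ≥ |X| + s`. -/
def SurplusGE {V : Type} (G : SimpleGraph V) (s : ℕ) : Prop :=
  ∀ X : Set V, X.Nonempty → IndepSet G X → X.ncard + s ≤ (nbhd G X).ncard

/-- The matching `M` saturates the vertex `v`. -/
def Saturates {V : Type} (M : Finset (Sym2 V)) (v : V) : Prop := ∃ e ∈ M, v ∈ e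

/-- `O(G)`: vertices left unsaturated by some maximum matching of `G`. -/
def OSet {V : Type} (G : SimpleGraph V) : Set V :=
  {v | ∃ M : Finset (Sym2 V), IsMatchingSet G M ∧ M.card = MMnum G ∧ ¬ Saturates M v}

/-- `I(G)`: vertices outside `O(G)` having a neighbour in `O(G)`. -/
def ISet {V : Type} (G : SimpleGraph V) : Set V := nbhd G (OSet G)

/-- `P(G)`: the remaining vertices. -/
def GEPSet {V : Type} (G : SimpleGraph V) : Set V := (OSet G ∪ ISet G)ᶜ

/-!
Fix a minimum fractional vertex cover `x` and split the vertices into `V₁ = {x > 1/2}`,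
`V½ = {x = 1/2}` and `V₀ = {x < 1/2}`. Minimality of `x` yields Hall's condition: moving weight
`ε` off a set `Y` and onto the vertices joined to `Y` by tight edges keeps `x` feasible, so there
are at least `|Y|` such vertices. Hence `V₁` can be matched into `V₀`, and for a minimum vertex
cover `T` the set `V₁ ∪ (V½ \ T)` (note that `V½ \ T` is independent) can be matched into the
remaining vertices. A vertex cover meets each edge of the first matching outside `V½`, so
`OPT ≥ |V₁| + |V½ ∩ T|`; the second gives `MM ≥ |V₁| + |V½ \ T|`; and rounding `x` gives
`LP ≤ |V₁| + |V½| / 2`. Adding up yields `OPT ≥ 2·LP − MM`.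
-/

open Finset Filter Topology

theorem eventually_le_add_mul {𝕜 : Type*} [Field 𝕜] [LinearOrder 𝕜] [IsStrictOrderedRing 𝕜]
    [TopologicalSpace 𝕜] [OrderTopology 𝕜] {a b c : 𝕜} (hca : c ≤ a) (hb : c = a → 0 ≤ b) :
    ∀ᶠ ε in 𝓝[>] (0 : 𝕜), c ≤ a + ε * b := by
  rcases hca.lt_or_eq with hlt | heq
  · have hlim : Tendsto (fun ε => a + ε * b) (𝓝 0) (𝓝 a) := by
      have hcont : Continuous fun ε : 𝕜 => a + ε * b := by fun_prop
      simpa using hcont.tendsto 0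
    exact ((hlim.eventually (eventually_gt_nhds hlt)).filter_mono nhdsWithin_le_nhds).mono
      fun _ h => h.le
  · filter_upwards [self_mem_nhdsWithin] with ε (hε : 0 < ε)
    rw [heq]
    exact le_add_of_nonneg_right (mul_nonneg hε.le (hb heq))

section

variable {V : Type} {G : SimpleGraph V} {x : V → ℝ}

theorem card_le_card_inter_of_injective {T : Finset V}
    (hT : ∀ ⦃u v⦄, G.Adj u v → u ∈ T ∨ v ∈ T) {S R : Finset V} (hSR : Disjoint S R)
    {f : S → V} (hf : Function.Injective f) (hfR : ∀ a, f a ∈ R ∧ G.Adj a (f a)) :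
    #S ≤ #(T ∩ (S ∪ R)) := by
  have hfS : ∀ a, f a ∉ S := fun a h => disjoint_left.1 hSR h (hfR a).1
  set g : S → V := fun a => if (a : V) ∈ T then a else f a
  have hgT : ∀ a, g a ∈ T ∩ (S ∪ R) := by
    intro a
    by_cases ha : (a : V) ∈ T
    · simp only [g, ha, ↓reduceIte, mem_inter, mem_union, a.2, true_or, and_self]
    · have hfa : f a ∈ T := (hT (hfR a).2).resolve_left ha
      simp only [g, ha, ↓reduceIte, mem_inter, mem_union, hfa, (hfR a).1, or_true, and_self]
  have hg : Function.Injective g := by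
    intro a b hab
    by_cases ha : (a : V) ∈ T <;> by_cases hb : (b : V) ∈ T <;>
      simp only [g, ha, hb, ↓reduceIte] at hab
    · exact Subtype.ext hab
    · exact absurd (hab ▸ a.2) (hfS b)
    · exact absurd (hab ▸ b.2) (hfS a)
    · exact hf hab
  rw [← card_attach]
  exact card_le_card_of_injOn g (fun a _ => hgT a) hg.injOn

variable [Fintype V]

theorem exists_isFVC_forall_fvcWeight_le (G : SimpleGraph V) :
    ∃ x, IsFVC G x ∧ ∀ y, IsFVC G y → fvcWeight x ≤ fvcWeight y := by
  have hclosed : IsClosed {x : V → ℝ | IsFVC G x} := by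
    simp only [IsFVC, Set.ofPred_and, Set.ofPred_forall]
    refine (isClosed_iInter fun v => ?_).inter
      (isClosed_iInter fun u => isClosed_iInter fun v => isClosed_iInter fun _ => ?_)
    · exact (isClosed_le continuous_const (continuous_apply v)).inter
        (isClosed_le (continuous_apply v) continuous_const)
    · exact isClosed_le continuous_const ((continuous_apply u).add (continuous_apply v))
  have hcompact : IsCompact {x : V → ℝ | IsFVC G x} :=
    (isCompact_univ_pi fun _ => isCompact_Icc).of_isClosed_subset hclosed
      fun x hx v _ => hx.1 v
  have hone : IsFVC G 1 := ⟨fun _ => by norm_num, fun _ _ _ => by norm_num⟩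
  obtain ⟨x, hx, hmin⟩ := hcompact.exists_isMinOn ⟨1, hone⟩
    (continuous_finsetSum _ fun v _ => continuous_apply v).continuousOn
  exact ⟨x, hx, hmin⟩

theorem LPopt_le_fvcWeight (hx : IsFVC G x) : LPopt G ≤ fvcWeight x :=
  csInf_le ⟨0, by rintro w ⟨y, hy, rfl⟩; exact sum_nonneg fun v _ => (hy.1 v).1⟩ ⟨x, hx, rfl⟩

theorem card_le_MMnum {M : Finset (Sym2 V)} (hM : IsMatchingSet G M) : #M ≤ MMnum G :=
  le_csSup ⟨Fintype.card (Sym2 V), by rintro n ⟨M', _, rfl⟩; exact M'.card_le_univ⟩ ⟨M, hM, rfl⟩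

theorem exists_vertexCover_card_eq_VCnum (G : SimpleGraph V) :
    ∃ T : Finset V, (∀ ⦃u v⦄, G.Adj u v → u ∈ T ∨ v ∈ T) ∧ #T = VCnum G := by
  have hcover : ∀ ⦃u v⦄, G.Adj u v → u ∈ univ ∨ v ∈ univ := fun u _ _ => Or.inl (mem_univ u)
  exact Nat.sInf_mem (s := {n | ∃ T : Finset V, (∀ ⦃u v⦄, G.Adj u v → u ∈ T ∨ v ∈ T) ∧ #T = n})
    ⟨_, univ, hcover, rfl⟩

theorem IsFVC.LPopt_le_card_add_card_div_two (hx : IsFVC G x) :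
    LPopt G ≤ #{v | 1 / 2 < x v} + #{v | x v = 1 / 2} / 2 := by
  set y : V → ℝ := fun v => if 1 / 2 < x v then 1 else if x v = 1 / 2 then 1 / 2 else 0
  have hy : IsFVC G y := by
    refine ⟨fun v => by simp only [y]; split_ifs <;> norm_num, fun u v huv => ?_⟩
    have := hx.2 huv
    simp only [y]
    split_ifs <;> grind
  have hweight : fvcWeight y = #{v | 1 / 2 < x v} + #{v | x v = 1 / 2} / 2 := by
    have hsplit : ∀ v,
        y v = (if 1 / 2 < x v then 1 else 0) + (if x v = 1 / 2 then 1 else 0) / 2 := by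
      intro v
      simp only [y]
      split_ifs <;> grind
    simp only [fvcWeight, hsplit, sum_add_distrib, ← sum_div, sum_boole]
  exact hweight ▸ LPopt_le_fvcWeight hy

theorem IsFVC.eventually_isFVC_add_mul (hx : IsFVC G x) {Y B : Finset V}
    (hY : ∀ v ∈ Y, 0 < x v) (hB : ∀ v ∈ B, x v < 1)
    (htight : ∀ u ∈ Y, ∀ v, G.Adj u v → x u + x v = 1 → v ∈ B ∧ v ∉ Y) :
    ∀ᶠ ε in 𝓝[>] (0 : ℝ), IsFVC G fun v =>
      x v + ε * ((if v ∈ B then 1 else 0) - if v ∈ Y then 1 else 0) := by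
  set d : V → ℝ := fun v => (if v ∈ B then 1 else 0) - if v ∈ Y then 1 else 0
  have hvertex : ∀ v, ∀ᶠ ε in 𝓝[>] (0 : ℝ), 0 ≤ x v + ε * d v ∧ x v + ε * d v ≤ 1 := by
    intro v
    have hlow := eventually_le_add_mul (b := d v) (hx.1 v).1 fun h => by
      have : v ∉ Y := fun hv => (hY v hv).ne h
      simp only [d, this, ↓reduceIte]
      split_ifs <;> norm_num
    have hup := eventually_le_add_mul (b := -d v) (neg_le_neg (hx.1 v).2) fun h => by
      have : v ∉ B := fun hv => (hB v hv).ne (neg_inj.1 h).symm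
      simp only [d, this, ↓reduceIte]
      split_ifs <;> norm_num
    filter_upwards [hlow, hup] with ε h₁ h₂
    constructor <;> linarith
  have hdtight : ∀ u v, G.Adj u v → x u + x v = 1 → u ∈ Y → 0 ≤ d u + d v := by
    intro u v huv h hu
    obtain ⟨hvB, hvY⟩ := htight u hu v huv h
    simp only [d, hvB, hvY, ↓reduceIte]
    split_ifs <;> norm_num
  have hedge : ∀ u v, G.Adj u v →
      ∀ᶠ ε in 𝓝[>] (0 : ℝ), 1 ≤ x u + ε * d u + (x v + ε * d v) := by
    intro u v huv
    have := eventually_le_add_mul (hx.2 huv) fun h => by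
      by_cases hu : u ∈ Y
      · exact hdtight u v huv h.symm hu
      by_cases hv : v ∈ Y
      · linarith [hdtight v u huv.symm (by linarith) hv]
      simp only [d, hu, hv, ↓reduceIte]
      split_ifs <;> norm_num
    filter_upwards [this] with ε hε
    linarith
  have hedges :
      ∀ᶠ ε in 𝓝[>] (0 : ℝ), ∀ u v, G.Adj u v → 1 ≤ x u + ε * d u + (x v + ε * d v) := by
    refine eventually_all.2 fun u => eventually_all.2 fun v => ?_
    by_cases huv : G.Adj u v
    · exact (hedge u v huv).mono fun _ h _ => h
    · exact .of_forall fun _ h => absurd h huv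
  filter_upwards [eventually_all.2 hvertex, hedges] with ε h₁ h₂
  exact ⟨h₁, h₂⟩

theorem card_le_card_of_forall_fvcWeight_le (hx : IsFVC G x)
    (hmin : ∀ y, IsFVC G y → fvcWeight x ≤ fvcWeight y) {Y B : Finset V}
    (hY : ∀ v ∈ Y, 0 < x v) (hB : ∀ v ∈ B, x v < 1)
    (htight : ∀ u ∈ Y, ∀ v, G.Adj u v → x u + x v = 1 → v ∈ B ∧ v ∉ Y) : #Y ≤ #B := by
  obtain ⟨ε, hfvc, hε⟩ :=
    ((hx.eventually_isFVC_add_mul hY hB htight).and self_mem_nhdsWithin).exists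
  have hweight := hmin _ hfvc
  simp only [fvcWeight, sum_add_distrib, ← mul_sum, sum_sub_distrib, sum_boole,
    filter_mem_eq_inter, univ_inter] at hweight
  have : (#Y : ℝ) ≤ #B := by nlinarith [show (0 : ℝ) < ε from hε]
  exact_mod_cast this

theorem exists_injective_adj_of_forall_fvcWeight_le (hx : IsFVC G x)
    (hmin : ∀ y, IsFVC G y → fvcWeight x ≤ fvcWeight y) {S R : Finset V}
    (hS : ∀ v ∈ S, 0 < x v) (hR : ∀ v ∈ R, x v < 1) (hSR : Disjoint S R)
    (htight : ∀ u ∈ S, ∀ v, G.Adj u v → x u + x v = 1 → v ∈ R) :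
    ∃ f : S → V, Function.Injective f ∧ ∀ a, f a ∈ R ∧ G.Adj a (f a) := by
  set t : S → Finset V := fun a => {v ∈ R | G.Adj a v}
  suffices hall : ∀ s : Finset S, #s ≤ #(s.biUnion t) by
    obtain ⟨f, hf, hft⟩ := (all_card_le_biUnion_card_iff_exists_injective t).1 hall
    exact ⟨f, hf, fun a => mem_filter.1 (hft a)⟩
  intro s
  have hsS : ∀ v ∈ s.map (.subtype _), v ∈ S := by
    simp only [Finset.mem_map, Function.Embedding.coe_subtype]
    rintro _ ⟨a, -, rfl⟩
    exact a.2
  rw [← card_map (.subtype _)]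
  refine card_le_card_of_forall_fvcWeight_le hx hmin (fun v hv => hS v (hsS v hv))
    (fun v hv => ?_) fun u hu v huv hsum => ⟨?_, fun hv => ?_⟩
  · obtain ⟨a, -, hva⟩ := mem_biUnion.1 hv
    exact hR v (mem_filter.1 hva).1
  · obtain ⟨a, ha, rfl⟩ := Finset.mem_map.1 hu
    exact mem_biUnion.2 ⟨a, ha, mem_filter.2 ⟨htight a a.2 v huv hsum, huv⟩⟩
  · exact disjoint_left.1 hSR (hsS v hv) (htight u (hsS u hu) v huv hsum)

theorem card_le_MMnum_of_injective {S R : Finset V} (hSR : Disjoint S R) {f : S → V}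
    (hf : Function.Injective f) (hfR : ∀ a, f a ∈ R ∧ G.Adj a (f a)) : #S ≤ MMnum G := by
  have hfS : ∀ a, f a ∉ S := fun a h => disjoint_left.1 hSR h (hfR a).1
  have hmem : ∀ a b : S, (a : V) ∈ s((b : V), f b) → a = b := by
    intro a b h
    rcases Sym2.mem_iff.1 h with h | h
    · exact Subtype.ext h
    · exact absurd (h ▸ a.2) (hfS b)
  have hfmem : ∀ a b : S, f a ∈ s((b : V), f b) → a = b := by
    intro a b h
    rcases Sym2.mem_iff.1 h with h | h
    · exact absurd (h ▸ b.2) (hfS a)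
    · exact hf h
  set M := S.attach.image fun a : S => s((a : V), f a)
  have hM : IsMatchingSet G M := by
    refine ⟨?_, ?_⟩
    · simp only [M, mem_image]
      rintro _ ⟨a, -, rfl⟩
      exact (hfR a).2
    · simp only [M, mem_image]
      rintro _ ⟨a, -, rfl⟩ _ ⟨b, -, rfl⟩ hab v hva hvb
      rcases Sym2.mem_iff.1 hva with rfl | rfl
      · exact hab (by rw [hmem a b hvb])
      · exact hab (by rw [hfmem a b hvb])
  have hcard : #M = #S := by
    have hinj : Function.Injective fun a : S => s((a : V), f a) :=
      fun a b (h : s(_, _) = s(_, _)) => hmem a b (h ▸ Sym2.mem_mk_left _ _)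
    rw [card_image_of_injective _ hinj, card_attach]
  exact hcard ▸ card_le_MMnum hM

theorem card_add_card_le_card_of_forall_fvcWeight_le (hx : IsFVC G x)
    (hmin : ∀ y, IsFVC G y → fvcWeight x ≤ fvcWeight y) {T : Finset V}
    (hT : ∀ ⦃u v⦄, G.Adj u v → u ∈ T ∨ v ∈ T) :
    #{v | 1 / 2 < x v} + #{v ∈ T | x v = 1 / 2} ≤ #T := by
  set S : Finset V := {v | 1 / 2 < x v}
  set R : Finset V := {v | x v < 1 / 2}
  have hS : ∀ v ∈ S, 0 < x v := by
    simp only [S, mem_filter, mem_univ, true_and]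
    grind
  have hR : ∀ v ∈ R, x v < 1 := by
    simp only [R, mem_filter, mem_univ, true_and]
    grind
  have hSR : Disjoint S R := by
    simp only [S, R, disjoint_left, mem_filter, mem_univ, true_and, not_lt]
    exact fun _ h => h.le
  have htight : ∀ u ∈ S, ∀ v, G.Adj u v → x u + x v = 1 → v ∈ R := by
    simp only [S, R, mem_filter, mem_univ, true_and]
    grind
  obtain ⟨f, hf, hfR⟩ :=
    exists_injective_adj_of_forall_fvcWeight_le hx hmin hS hR hSR htight
  have hST : #S ≤ #{v ∈ T | ¬x v = 1 / 2} := by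
    refine (card_le_card_inter_of_injective hT hSR hf hfR).trans (card_le_card ?_)
    intro v
    simp only [S, R, mem_inter, mem_union, mem_filter, mem_univ, true_and]
    grind
  have hsplit := card_filter_add_card_filter_not (s := T) fun v => x v = 1 / 2
  omega

theorem card_add_card_le_MMnum_of_forall_fvcWeight_le (hx : IsFVC G x)
    (hmin : ∀ y, IsFVC G y → fvcWeight x ≤ fvcWeight y) {I : Finset V}
    (hI : ∀ v ∈ I, x v = 1 / 2) (hIind : ∀ u ∈ I, ∀ v ∈ I, ¬G.Adj u v) :
    #{v | 1 / 2 < x v} + #I ≤ MMnum G := by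
  set S : Finset V := {v | 1 / 2 < x v}
  set R : Finset V := {v | x v ≤ 1 / 2 ∧ v ∉ I}
  have hS : ∀ v ∈ S ∪ I, 0 < x v := by
    simp only [S, mem_union, mem_filter, mem_univ, true_and]
    rintro v (hv | hv)
    · linarith
    · linarith [hI v hv]
  have hR : ∀ v ∈ R, x v < 1 := by
    simp only [R, mem_filter, mem_univ, true_and]
    grind
  have hSR : Disjoint (S ∪ I) R := by
    simp only [S, R, disjoint_left, mem_union, mem_filter, mem_univ, true_and]
    grind
  have htight : ∀ u ∈ S ∪ I, ∀ v, G.Adj u v → x u + x v = 1 → v ∈ R := by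
    simp only [S, R, mem_union, mem_filter, mem_univ, true_and]
    grind
  obtain ⟨f, hf, hfR⟩ :=
    exists_injective_adj_of_forall_fvcWeight_le hx hmin hS hR hSR htight
  rw [← card_union_of_disjoint]
  · exact card_le_MMnum_of_injective hSR hf hfR
  · simp only [S, disjoint_left, mem_filter, mem_univ, true_and]
    grind

end

/-- For every finite simple graph `G`, `OPT(G) ≥ 2·LP(G) − MM(G)`. -/
theorem vc_ge_two_lp_sub_mm {V : Type} [Fintype V] (G : SimpleGraph V) :
    2 * LPopt G - (MMnum G : ℝ) ≤ (VCnum G : ℝ) := by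
  obtain ⟨x, hx, hmin⟩ := exists_isFVC_forall_fvcWeight_le G
  obtain ⟨T, hT, hTcard⟩ := exists_vertexCover_card_eq_VCnum G
  have hLP := hx.LPopt_le_card_add_card_div_two
  have hVC := card_add_card_le_card_of_forall_fvcWeight_le hx hmin hT
  set I : Finset V := {v | x v = 1 / 2 ∧ v ∉ T}
  have hI : ∀ v ∈ I, x v = 1 / 2 := fun v hv => (mem_filter.1 hv).2.1
  have hIind : ∀ u ∈ I, ∀ v ∈ I, ¬G.Adj u v := fun u hu v hv huv =>
    (hT huv).elim (mem_filter.1 hu).2.2 (mem_filter.1 hv).2.2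
  have hMM := card_add_card_le_MMnum_of_forall_fvcWeight_le hx hmin hI hIind
  have hsplit : #I + #{v ∈ T | x v = 1 / 2} = #{v | x v = 1 / 2} := by
    rw [← card_filter_add_card_filter_not (s := {v | x v = 1 / 2}) (· ∉ T), filter_filter,
      filter_filter]
    congr 2
    ext v
    simp [and_comm]
  rw [← hTcard]
  rify at hVC hMM hsplit
  linarith
end

section
/- Let G be a finite simple graph with at least one vertex. The following are equivalent: (a) every fractional vertex cover of G has weight at least |V|/2, and the constant function x ≡ 1/2 is the unique fractional vertex cover of weight |V|/2; (b) surplus(G) ≥ 1, i.e., every nonempty independent set X of G satisfies |N(X)| ≥ |X| + 1. -/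
open scoped Classical

open Finset in
lemma sum_compare_aux {ι : Type} [DecidableEq ι] (f g : ι → ℝ) :
    ∀ (n : ℕ) (D E : Finset ι), D.card = n →
      (∀ v ∈ D, 0 < f v) → (∀ v ∈ E, 0 ≤ g v) →
      (∀ s : ℝ, 0 < s →
        (D.filter fun v => s ≤ f v).card ≤ (E.filter fun v => s ≤ g v).card) →
      ∑ v ∈ D, f v ≤ ∑ v ∈ E, g v := by
  intro n
  induction n with
  | zero =>
    intro D E hcard _ hE _
    rw [Finset.card_eq_zero.mp hcard, Finset.sum_empty]
    exact Finset.sum_nonneg hE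
  | succ n ih =>
    intro D E hcard hD hE hcount
    have hne : D.Nonempty := Finset.card_pos.mp (by omega)
    obtain ⟨v, hv, hvmax⟩ := D.exists_max_image f hne
    have hfv : 0 < f v := hD v hv
    have h1 := hcount (f v) hfv
    have hvin : v ∈ D.filter fun u => f v ≤ f u := Finset.mem_filter.mpr ⟨hv, le_refl _⟩
    have h2 : (E.filter fun u => f v ≤ g u).Nonempty := by
      rw [← Finset.card_pos]
      have : 0 < (D.filter fun u => f v ≤ f u).card := Finset.card_pos.mpr ⟨v, hvin⟩
      omega
    obtain ⟨w, hw'⟩ := h2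
    have hw : w ∈ E := (Finset.mem_filter.mp hw').1
    have hfw : f v ≤ g w := (Finset.mem_filter.mp hw').2
    have key : ∑ u ∈ D.erase v, f u ≤ ∑ u ∈ E.erase w, g u := by
      apply ih
      · rw [Finset.card_erase_of_mem hv, hcard]
        omega
      · exact fun u hu => hD u (Finset.mem_of_mem_erase hu)
      · exact fun u hu => hE u (Finset.mem_of_mem_erase hu)
      · intro s hs
        by_cases hsf : s ≤ f v
        · rw [Finset.filter_erase, Finset.filter_erase]
          rw [Finset.card_erase_of_mem (Finset.mem_filter.mpr ⟨hv, hsf⟩)]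
          rw [Finset.card_erase_of_mem
            (Finset.mem_filter.mpr ⟨hw, le_trans hsf hfw⟩ : w ∈ E.filter fun u => s ≤ g u)]
          exact Nat.sub_le_sub_right (hcount s hs) 1
        · have : (D.erase v).filter (fun u => s ≤ f u) = ∅ := by
            apply Finset.filter_eq_empty_iff.mpr
            intro u hu hsu
            exact hsf (le_trans hsu (hvmax u (Finset.mem_of_mem_erase hu)))
          rw [this]
          exact Nat.zero_le _
    calc ∑ u ∈ D, f u = f v + ∑ u ∈ D.erase v, f u := (Finset.add_sum_erase _ _ hv).symm
      _ ≤ g w + ∑ u ∈ E.erase w, g u := add_le_add hfw key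
      _ = ∑ u ∈ E, g u := Finset.add_sum_erase _ _ hw

lemma ncard_eq_filter_card {V : Type} [Fintype V] (S : Set V) :
    S.ncard = (Finset.univ.filter (· ∈ S)).card := by
  rw [Set.ncard_eq_toFinset_card', ← Set.filter_mem_univ_eq_toFinset]

/-- All-`1/2` is the unique minimum fractional vertex cover iff `surplus(G) ≥ 1`. -/
theorem all_halves_unique_iff_surplus_ge_one {V : Type} [Fintype V] [Nonempty V]
    (G : SimpleGraph V) :
    ((∀ x : V → ℝ, IsFVC G x → (Fintype.card V : ℝ) / 2 ≤ fvcWeight x) ∧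
      (∀ x : V → ℝ, IsFVC G x → fvcWeight x = (Fintype.card V : ℝ) / 2 →
        x = fun _ => (1 : ℝ) / 2)) ↔ SurplusGE G 1 := by
  classical
  constructor
  · rintro ⟨hge, huniq⟩ X hXne hXind
    by_contra hcon
    push_neg at hcon
    have hNX : (nbhd G X).ncard ≤ X.ncard := by omega
    set x : V → ℝ := fun v => if v ∈ X then 0 else if v ∈ nbhd G X then 1 else 1/2 with hxdef
    have hfvc : IsFVC G x := by
      constructor
      · intro v
        simp only [hxdef]
        split_ifs <;> norm_num
      · intro u v huv
        by_cases hu : u ∈ X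
        · by_cases hv : v ∈ X
          · exact absurd huv (hXind u hu v hv)
          · have hvn : v ∈ nbhd G X := ⟨hv, u, hu, huv⟩
            simp only [hxdef, if_pos hu, if_neg hv, if_pos hvn]
            norm_num
        · by_cases hv : v ∈ X
          · have hun : u ∈ nbhd G X := ⟨hu, v, hv, huv.symm⟩
            simp only [hxdef, if_pos hv, if_neg hu, if_pos hun]
            norm_num
          · have h1 : (1:ℝ)/2 ≤ x u := by
              simp only [hxdef, if_neg hu]; split_ifs <;> norm_num
            have h2 : (1:ℝ)/2 ≤ x v := by
              simp only [hxdef, if_neg hv]; split_ifs <;> norm_num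
            linarith
    have hdisj : ∀ v, v ∈ nbhd G X → v ∉ X := fun v hv => hv.1
    have hxval : ∀ v, x v = 1/2 + (if v ∈ nbhd G X then (1:ℝ)/2 else 0)
        - (if v ∈ X then (1:ℝ)/2 else 0) := by
      intro v
      by_cases hv : v ∈ X
      · rw [if_pos hv, if_neg (fun h => hdisj v h hv)]
        simp only [hxdef, if_pos hv]; ring
      · simp only [hxdef, if_neg hv]
        split_ifs <;> ring
    have hsum1 : ∑ v, (if v ∈ nbhd G X then (1:ℝ)/2 else 0)
        = ((nbhd G X).ncard : ℝ) * (1/2) := by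
      rw [← Finset.sum_filter, Finset.sum_const, ncard_eq_filter_card (nbhd G X)]
      simp [mul_comm]
    have hsum2 : ∑ v, (if v ∈ X then (1:ℝ)/2 else 0) = (X.ncard : ℝ) * (1/2) := by
      rw [← Finset.sum_filter, Finset.sum_const, ncard_eq_filter_card X]
      simp [mul_comm]
    have hweight : fvcWeight x = (Fintype.card V : ℝ)/2
        + ((nbhd G X).ncard : ℝ) * (1/2) - (X.ncard : ℝ) * (1/2) := by
      unfold fvcWeight
      calc ∑ v, x v = ∑ v, (1/2 + (if v ∈ nbhd G X then (1:ℝ)/2 else 0)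
          - (if v ∈ X then (1:ℝ)/2 else 0)) := Finset.sum_congr rfl (fun v _ => hxval v)
        _ = _ := by
          rw [Finset.sum_sub_distrib, Finset.sum_add_distrib, hsum1, hsum2,
            Finset.sum_const, Finset.card_univ]
          push_cast
          ring
    have hle : fvcWeight x ≤ (Fintype.card V : ℝ)/2 := by
      rw [hweight]
      have : ((nbhd G X).ncard : ℝ) ≤ (X.ncard : ℝ) := Nat.cast_le.mpr hNX
      linarith
    have heq : fvcWeight x = (Fintype.card V : ℝ)/2 := le_antisymm hle (hge x hfvc)
    have h0 := huniq x hfvc heq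
    obtain ⟨v0, hv0⟩ := hXne
    have h1 := congrFun h0 v0
    simp only [hxdef, if_pos hv0] at h1
    norm_num at h1
  · intro hs
    -- key: any FVC with some coordinate below 1/2 has weight > n/2
    have key : ∀ x : V → ℝ, IsFVC G x →
        (Finset.univ.filter fun v => x v < 1/2).Nonempty →
        (Fintype.card V : ℝ)/2 < fvcWeight x := by
      intro x hx hDne
      set D := Finset.univ.filter fun v => x v < (1:ℝ)/2 with hDdef
      set E := Finset.univ.filter fun v => (1:ℝ)/2 < x v with hEdef
      obtain ⟨v0, hv0, hv0max⟩ := D.exists_max_image (fun v => 1/2 - x v) hDne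
      obtain ⟨m, hmdef⟩ : ∃ m : ℝ, m = 1/2 - x v0 := ⟨_, rfl⟩
      have hm : 0 < m := by
        have := (Finset.mem_filter.mp hv0).2
        linarith
      -- surplus consequence
      have surp : ∀ s : ℝ, 0 < s → s ≤ m →
          (Finset.univ.filter fun v => x v ≤ 1/2 - s).card + 1
            ≤ (Finset.univ.filter fun v => 1/2 + s ≤ x v).card := by
        intro s hspos hsm
        have hne : ({v | x v ≤ 1/2 - s} : Set V).Nonempty :=
          ⟨v0, by simp only [Set.mem_setOf_eq]; linarith⟩
        have hind : IndepSet G {v | x v ≤ 1/2 - s} := by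
          intro u hu v hv hadj
          have h2 := hx.2 hadj
          simp only [Set.mem_setOf_eq] at hu hv
          linarith
        have h := hs _ hne hind
        have hsub : nbhd G {v | x v ≤ 1/2 - s} ⊆ {v | 1/2 + s ≤ x v} := by
          rintro v ⟨hv, u, hu, hadj⟩
          have h2 := hx.2 hadj
          simp only [Set.mem_setOf_eq] at hu ⊢
          linarith
        have h2 : (nbhd G {v | x v ≤ 1/2 - s}).ncard
            ≤ ({v | 1/2 + s ≤ x v} : Set V).ncard :=
          Set.ncard_le_ncard hsub (Set.toFinite _)
        have e1 : ({v | x v ≤ 1/2 - s} : Set V).ncard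
            = (Finset.univ.filter fun v => x v ≤ 1/2 - s).card := by
          rw [ncard_eq_filter_card]
          congr 1
        have e2 : ({v | 1/2 + s ≤ x v} : Set V).ncard
            = (Finset.univ.filter fun v => 1/2 + s ≤ x v).card := by
          rw [ncard_eq_filter_card]
          congr 1
        omega
      -- find a heavy vertex w
      have hw' : (Finset.univ.filter fun v => 1/2 + m ≤ x v).Nonempty := by
        rw [← Finset.card_pos]
        have := surp m hm le_rfl
        omega
      obtain ⟨w, hw⟩ := hw'
      have hwge : 1/2 + m ≤ x w := (Finset.mem_filter.mp hw).2
      have hwE : w ∈ E := Finset.mem_filter.mpr ⟨Finset.mem_univ _, by linarith⟩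
      -- apply the comparison lemma
      have hcmp : ∑ v ∈ D, (1/2 - x v) ≤ ∑ v ∈ E.erase w, (x v - 1/2) := by
        apply sum_compare_aux (fun v => 1/2 - x v) (fun v => x v - 1/2) D.card D
          (E.erase w) rfl
        · intro v hv
          have := (Finset.mem_filter.mp hv).2
          linarith
        · intro v hv
          have := (Finset.mem_filter.mp (Finset.mem_of_mem_erase hv)).2
          linarith
        · intro s hspos
          by_cases hsm : s ≤ m
          · have lhs_eq : D.filter (fun v => s ≤ 1/2 - x v)
                = Finset.univ.filter fun v => x v ≤ 1/2 - s := by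
              rw [hDdef, Finset.filter_filter]
              apply Finset.filter_congr
              intro v _
              constructor
              · rintro ⟨_, h⟩; linarith
              · intro h; constructor <;> linarith
            have rhs_eq : (E.erase w).filter (fun v => s ≤ x v - 1/2)
                = (Finset.univ.filter fun v => 1/2 + s ≤ x v).erase w := by
              rw [Finset.filter_erase, hEdef, Finset.filter_filter]
              congr 1
              apply Finset.filter_congr
              intro v _
              constructor
              · rintro ⟨_, h⟩; linarith
              · intro h; constructor <;> linarith
            rw [lhs_eq, rhs_eq]
            have hwmem : w ∈ Finset.univ.filter fun v => 1/2 + s ≤ x v :=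
              Finset.mem_filter.mpr ⟨Finset.mem_univ _, by linarith⟩
            rw [Finset.card_erase_of_mem hwmem]
            have := surp s hspos hsm
            omega
          · have hempty : D.filter (fun v => s ≤ 1/2 - x v) = ∅ := by
              apply Finset.filter_eq_empty_iff.mpr
              intro v hv hsv
              have := hv0max v hv
              exact hsm (by linarith)
            rw [hempty]
            simp
      have hsumE : ∑ v ∈ E.erase w, (x v - 1/2) = ∑ v ∈ E, (x v - 1/2) - (x w - 1/2) := by
        have := Finset.add_sum_erase E (fun v => x v - 1/2) hwE
        linarith [this]
      -- weight decomposition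
      have hdecomp : fvcWeight x = (Fintype.card V : ℝ)/2
          + ∑ v ∈ E, (x v - 1/2) - ∑ v ∈ D, (1/2 - x v) := by
        have h1 : ∑ v ∈ E, (x v - 1/2) = ∑ v : V, max (x v - 1/2) 0 := by
          rw [hEdef, Finset.sum_filter]
          apply Finset.sum_congr rfl
          intro v _
          split_ifs with h
          · rw [max_eq_left]; linarith
          · rw [max_eq_right]; push_neg at h; linarith
        have h2 : ∑ v ∈ D, (1/2 - x v) = ∑ v : V, max (1/2 - x v) 0 := by
          rw [hDdef, Finset.sum_filter]
          apply Finset.sum_congr rfl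
          intro v _
          split_ifs with h
          · rw [max_eq_left]; linarith
          · rw [max_eq_right]; push_neg at h; linarith
        have h3 : ∀ v : V, x v = 1/2 + max (x v - 1/2) 0 - max (1/2 - x v) 0 := by
          intro v
          rcases le_total (x v) (1/2) with h | h
          · rw [max_eq_right (by linarith : x v - 1/2 ≤ 0),
              max_eq_left (by linarith : (0:ℝ) ≤ 1/2 - x v)]
            ring
          · rw [max_eq_left (by linarith : (0:ℝ) ≤ x v - 1/2),
              max_eq_right (by linarith : 1/2 - x v ≤ 0)]
            ring
        rw [h1, h2]
        unfold fvcWeight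
        calc ∑ v, x v = ∑ v : V, (1/2 + max (x v - 1/2) 0 - max (1/2 - x v) 0) :=
            Finset.sum_congr rfl (fun v _ => h3 v)
          _ = _ := by
            rw [Finset.sum_sub_distrib, Finset.sum_add_distrib, Finset.sum_const,
              Finset.card_univ]
            push_cast
            ring
      rw [hdecomp]
      have hfin : ∑ v ∈ D, (1/2 - x v) ≤ ∑ v ∈ E, (x v - 1/2) - m := by
        rw [hsumE] at hcmp
        linarith
      linarith
    constructor
    · intro x hx
      by_cases hD : (Finset.univ.filter fun v => x v < (1:ℝ)/2).Nonempty
      · exact le_of_lt (key x hx hD)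
      · have hall : ∀ v, 1/2 ≤ x v := by
          intro v
          by_contra h
          exact hD ⟨v, Finset.mem_filter.mpr ⟨Finset.mem_univ _, by linarith⟩⟩
        have hconst : ∑ _v : V, (1:ℝ)/2 = (Fintype.card V : ℝ)/2 := by
          rw [Finset.sum_const, Finset.card_univ, nsmul_eq_mul]
          ring
        unfold fvcWeight
        rw [← hconst]
        exact Finset.sum_le_sum (fun v _ => hall v)
    · intro x hx heq
      by_cases hD : (Finset.univ.filter fun v => x v < (1:ℝ)/2).Nonempty
      · exact absurd heq (ne_of_gt (key x hx hD))
      · have hall : ∀ v, 1/2 ≤ x v := by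
          intro v
          by_contra h
          exact hD ⟨v, Finset.mem_filter.mpr ⟨Finset.mem_univ _, by linarith⟩⟩
        have hz : ∑ v : V, (x v - 1/2) = 0 := by
          rw [Finset.sum_sub_distrib, Finset.sum_const, Finset.card_univ]
          unfold fvcWeight at heq
          rw [heq]
          push_cast
          ring
        have hz2 := (Finset.sum_eq_zero_iff_of_nonneg
          (fun v _ => by linarith [hall v] : ∀ v ∈ Finset.univ, (0:ℝ) ≤ x v - 1/2)).mp hz
        funext v
        have h3 := hz2 v (Finset.mem_univ v)
        linarith
end

section
/- Let G be a finite simple graph with surplus(G) ≥ s for some natural number s. Then for every set S of exactly s vertices of G, the induced subgraph G − S satisfies LP(G − S) = LP(G) − s/2. -/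
open scoped Classical

/-!
With surplus at least `0`, Hall's theorem matches the independent set `{v | x v < 1/2}` of any
fractional vertex cover `x` injectively into its neighbourhood; pairing each such vertex with its
partner shows that every cover weighs at least `|V|/2`, which the constant cover `1/2` attains.
Deleting `s` vertices costs at most `s` in every `|N(X)|`, so `G - S` still has surplus at least
`0`, and `LP(G - S) = (|V| - s)/2`.
-/

open Finset

namespace SurplusGE

variable {V : Type} {G : SimpleGraph V}

theorem mono {s t : ℕ} (h : SurplusGE G s) (hts : t ≤ s) : SurplusGE G t :=
  fun X hX hind => (Nat.add_le_add_left hts _).trans (h X hX hind)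

theorem induce_compl [Finite V] {S : Set V} {t : ℕ} (h : SurplusGE G (t + S.ncard)) :
    SurplusGE (G.induce Sᶜ) t := by
  intro X hX hind
  have hindG : IndepSet G (Subtype.val '' X) := by
    rintro _ ⟨u, hu, rfl⟩ _ ⟨v, hv, rfl⟩ huv
    exact hind u hu v hv huv
  have hsub : nbhd G (Subtype.val '' X) ⊆ Subtype.val '' nbhd (G.induce Sᶜ) X ∪ S := by
    rintro v ⟨hvX, _, ⟨u, hu, rfl⟩, huv⟩
    by_cases hvS : v ∈ S
    · exact Or.inr hvS
    · exact Or.inl ⟨⟨v, hvS⟩, ⟨fun hv => hvX ⟨_, hv, rfl⟩, u, hu, huv⟩, rfl⟩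
  have hX := h _ (hX.image _) hindG
  have hN := (Set.ncard_le_ncard hsub).trans (Set.ncard_union_le _ _)
  rw [Set.ncard_image_of_injective _ Subtype.val_injective] at hX hN
  omega

end SurplusGE

theorem IsFVC.indepSet_lt_half {V : Type} {G : SimpleGraph V} {x : V → ℝ} (hx : IsFVC G x) :
    IndepSet G {v | x v < 1 / 2} := by
  intro u hu v hv huv
  have := hx.2 huv
  simp only [Set.mem_ofPred_eq] at hu hv
  linarith

theorem SurplusGE.exists_injective_adj {V : Type} [Fintype V] {G : SimpleGraph V}
    (h : SurplusGE G 0) {X : Finset V} (hX : IndepSet G X) :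
    ∃ f : X → V, Function.Injective f ∧ ∀ u : X, G.Adj u (f u) := by
  suffices hall : ∀ t : Finset X, #t ≤ #(t.biUnion fun u => G.neighborFinset u) by
    obtain ⟨f, hf, hadj⟩ := (Finset.all_card_le_biUnion_card_iff_exists_injective _).mp hall
    exact ⟨f, hf, fun u => (G.mem_neighborFinset _ _).mp (hadj u)⟩
  intro t
  rcases t.eq_empty_or_nonempty with rfl | ht
  · simp
  have hsub : nbhd G (t.map (Function.Embedding.subtype _) : Set V) ⊆
      ↑(t.biUnion fun u => G.neighborFinset u) := by
    rintro v ⟨-, _, hu, huv⟩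
    obtain ⟨u, hut, rfl⟩ := Finset.mem_map.mp hu
    exact Finset.mem_biUnion.mpr ⟨u, hut, (G.mem_neighborFinset _ _).mpr huv⟩
  have hind : IndepSet G (t.map (Function.Embedding.subtype _) : Set V) := by
    intro u hu v hv
    obtain ⟨u, -, rfl⟩ := Finset.mem_map.mp hu
    obtain ⟨v, -, rfl⟩ := Finset.mem_map.mp hv
    exact hX _ u.2 _ v.2
  have := (h _ (by simpa using ht) hind).trans (Set.ncard_le_ncard hsub)
  simpa only [Set.ncard_coe_finset, Finset.card_map, add_zero] using this

theorem sum_nonneg_of_injective_compensation {ι : Type} [Fintype ι]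
    (y : ι → ℝ) (X : Finset ι) (f : X → ι) (hf : Function.Injective f) (hfX : ∀ u, f u ∉ X)
    (hy : ∀ v ∉ X, 0 ≤ y v) (hpair : ∀ u : X, 0 ≤ y u + y (f u)) : 0 ≤ ∑ v, y v := by
  have hYX : univ.image f ⊆ Xᶜ := by
    intro v hv
    obtain ⟨u, -, rfl⟩ := Finset.mem_image.mp hv
    exact Finset.mem_compl.mpr (hfX u)
  calc 0 ≤ ∑ u : X, (y u + y (f u)) := Finset.sum_nonneg fun u _ => hpair u
    _ = ∑ v ∈ X, y v + ∑ v ∈ univ.image f, y v := by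
      rw [Finset.sum_add_distrib, Finset.sum_coe_sort X y,
        Finset.sum_image fun a _ b _ hab => hf hab]
    _ ≤ ∑ v ∈ X, y v + ∑ v ∈ Xᶜ, y v := by
      gcongr ∑ v ∈ X, y v + ?_
      exact Finset.sum_le_sum_of_subset_of_nonneg hYX fun v hv _ => hy v (Finset.mem_compl.mp hv)
    _ = ∑ v, y v := Finset.sum_add_sum_compl X y

theorem SurplusGE.half_card_le_fvcWeight {V : Type} [Fintype V] {G : SimpleGraph V}
    (h : SurplusGE G 0) {x : V → ℝ} (hx : IsFVC G x) :
    (Fintype.card V : ℝ) / 2 ≤ fvcWeight x := by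
  set X := univ.filter fun v => x v < 1 / 2
  obtain ⟨f, hf, hadj⟩ := h.exists_injective_adj (X := X) (by simpa [X] using hx.indepSet_lt_half)
  have hpair : ∀ u : X, 0 ≤ (x u - 1 / 2) + (x (f u) - 1 / 2) := fun u => by
    linarith [hx.2 (hadj u)]
  have hfX : ∀ u, f u ∉ X := fun u hu => by
    have hu' := (Finset.mem_filter.mp u.2).2
    linarith [(Finset.mem_filter.mp hu).2, hpair u]
  have hy : ∀ v ∉ X, 0 ≤ x v - 1 / 2 := fun v hv => by
    simpa [X] using hv
  have := sum_nonneg_of_injective_compensation _ X f hf hfX hy hpair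
  rw [Finset.sum_sub_distrib, Finset.sum_const, Finset.card_univ, nsmul_eq_mul] at this
  unfold fvcWeight
  linarith

theorem SurplusGE.LPopt_eq {V : Type} [Fintype V] {G : SimpleGraph V} (h : SurplusGE G 0) :
    LPopt G = (Fintype.card V : ℝ) / 2 := by
  refine IsLeast.csInf_eq ⟨⟨fun _ => 1 / 2, ⟨fun _ => by norm_num, fun _ _ _ => by norm_num⟩, ?_⟩, ?_⟩
  · simp only [fvcWeight, Finset.sum_const, Finset.card_univ, nsmul_eq_mul]
    ring
  · rintro _ ⟨x, hx, rfl⟩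
    exact h.half_card_le_fvcWeight hx

/-- If `surplus(G) ≥ s`, then deleting any `s` vertices drops `LP` by exactly `s/2`. -/
theorem lp_drop_of_surplus {V : Type} [Fintype V] (G : SimpleGraph V) (s : ℕ)
    (hsur : SurplusGE G s) (S : Set V) (hS : S.ncard = s) :
    LPopt (G.induce Sᶜ) = LPopt G - (s : ℝ) / 2 := by
  have hG : SurplusGE G 0 := hsur.mono s.zero_le
  have hGS : SurplusGE (G.induce Sᶜ) 0 := SurplusGE.induce_compl (by rwa [hS, zero_add])
  have hcard : Fintype.card ↥Sᶜ + s = Fintype.card V := by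
    rw [Fintype.card_compl_set, ← hS, Set.ncard_eq_toFinset_card', Set.toFinset_card]
    exact Nat.sub_add_cancel (Fintype.card_subtype_le _)
  rw [hG.LPopt_eq, hGS.LPopt_eq, ← hcard, Nat.cast_add]
  ring
end

section
/- Let G be a finite simple graph and let x be a half-integral optimal solution to LPVC(G). Let H be the bipartite subgraph of G with vertex set V^x_1 ∪ V^x_0 whose edges are exactly the edges of G with one endpoint in V^x_1 and the other in V^x_0. Then H has a matching that saturates every vertex of V^x_1. -/
open scoped Classical

/-- The bipartite subgraph of `G` whose edges go between `V^x_1` and `V^x_0`. -/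
def bipartH {V : Type} (G : SimpleGraph V) (x : V → ℝ) : SimpleGraph V where
  Adj u v := G.Adj u v ∧ ((x u = 1 ∧ x v = 0) ∨ (x u = 0 ∧ x v = 1))
  symm := ⟨by
    rintro u v ⟨h, h2⟩
    exact ⟨h.symm, h2.elim (fun p => Or.inr ⟨p.2, p.1⟩) (fun p => Or.inl ⟨p.2, p.1⟩)⟩⟩
  loopless := ⟨fun v h => G.loopless.irrefl v h.1⟩

/-! By Hall's theorem it suffices that every `S ⊆ V^x_1` has at least `|S|` neighbours in `H`;
these neighbours form a set `N ⊆ V^x_0`. Resetting `x` to `1/2` on `S ∪ N` keeps a fractional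
vertex cover (a neighbour of `S` outside `N` has value at least `1/2` by half-integrality, and a
neighbour of `N` has value `1`) and changes the weight by `(|N| - |S|)/2`, so optimality of `x`
forces `|S| ≤ |N|`. -/

section

variable {V : Type}

theorem isBipartiteWith_bipartH (G : SimpleGraph V) (x : V → ℝ) :
    (bipartH G x).IsBipartiteWith {v | x v = 1} {v | x v = 0} where
  disjoint := Set.disjoint_left.mpr fun v (h1 : x v = 1) (h0 : x v = 0) => by simp_all
  mem_of_adj _ _ h := h.2

theorem IsFVC.piecewise_half {G : SimpleGraph V} {x : V → ℝ} (hx : IsFVC G x) (T : Finset V)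
    (hcross : ∀ ⦃u v⦄, G.Adj u v → u ∈ T → v ∉ T → 1 / 2 ≤ x v) :
    IsFVC G (T.piecewise (fun _ => 1 / 2) x) := by
  refine ⟨fun v => ?_, fun u v huv => ?_⟩
  · by_cases hv : v ∈ T
    · simp only [Finset.piecewise_eq_of_mem _ _ _ hv]; norm_num
    · simpa only [Finset.piecewise_eq_of_notMem _ _ _ hv] using hx.1 v
  · by_cases hu : u ∈ T <;> by_cases hv : v ∈ T <;>
      simp only [Finset.piecewise_eq_of_mem, Finset.piecewise_eq_of_notMem, hu, hv,
        not_false_eq_true]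
    · norm_num
    · linarith [hcross huv hu hv]
    · linarith [hcross huv.symm hv hu]
    · exact hx.2 huv

theorem fvcWeight_piecewise_half [Fintype V] (x : V → ℝ) (T : Finset V) :
    fvcWeight (T.piecewise (fun _ => 1 / 2) x) = fvcWeight x + ∑ v ∈ T, (1 / 2 - x v) := by
  unfold fvcWeight
  rw [Finset.sum_piecewise, Finset.univ_inter, Finset.sum_sub_distrib,
    ← Finset.sum_add_sum_compl T x, Finset.compl_eq_univ_sdiff]
  ring

theorem LPopt_le_fvcWeight_s3 [Fintype V] {G : SimpleGraph V} {y : V → ℝ} (hy : IsFVC G y) :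
    LPopt G ≤ fvcWeight y :=
  csInf_le ⟨0, by
    rintro w ⟨z, hz, rfl⟩
    exact Finset.sum_nonneg fun v _ => (hz.1 v).1⟩ ⟨y, hy, rfl⟩

theorem SimpleGraph.Subgraph.IsMatching.isMatchingSet [Fintype V] {G : SimpleGraph V}
    {M : G.Subgraph} (hM : M.IsMatching) : IsMatchingSet G M.edgeSet.toFinset := by
  refine ⟨fun e he => M.edgeSet_subset (Set.mem_toFinset.mp he),
    fun e he f hf hne v hve hvf => ?_⟩
  obtain ⟨a, rfl⟩ := Sym2.mem_iff_exists.mp hve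
  obtain ⟨b, rfl⟩ := Sym2.mem_iff_exists.mp hvf
  rw [Set.mem_toFinset, SimpleGraph.Subgraph.mem_edgeSet] at he hf
  exact hne (congrArg _ (hM.eq_of_adj_left he hf))

theorem SimpleGraph.Subgraph.IsMatching.saturates_of_mem_verts [Fintype V] {G : SimpleGraph V}
    {M : G.Subgraph} (hM : M.IsMatching) {v : V} (hv : v ∈ M.verts) :
    Saturates M.edgeSet.toFinset v := by
  obtain ⟨w, hvw, -⟩ := hM hv
  exact ⟨s(v, w), Set.mem_toFinset.mpr hvw, Sym2.mem_mk_left v w⟩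

theorem ncard_le_ncard_biUnion_neighborSet_bipartH [Fintype V] {G : SimpleGraph V}
    {x : V → ℝ}
    (hx : IsFVC G x) (hhalf : ∀ v, x v = 0 ∨ x v = 1 / 2 ∨ x v = 1)
    (hopt : fvcWeight x = LPopt G) {s : Set V} (hs : s ⊆ {v | x v = 1}) :
    s.ncard ≤ (⋃ v ∈ s, (bipartH G x).neighborSet v).ncard := by
  have hN : (⋃ v ∈ s, (bipartH G x).neighborSet v) ⊆ {v | x v = 0} :=
    Set.iUnion₂_subset fun u hu =>
      SimpleGraph.isBipartiteWith_neighborSet_subset (isBipartiteWith_bipartH G x) (hs hu)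
  set S := s.toFinset
  set N := (⋃ v ∈ s, (bipartH G x).neighborSet v).toFinset
  rw [Set.ncard_eq_toFinset_card', Set.ncard_eq_toFinset_card']
  by_contra! hlt
  have hS1 : ∀ v ∈ S, x v = 1 := fun v hv => hs (Set.mem_toFinset.mp hv)
  have hN0 : ∀ v ∈ N, x v = 0 := fun v hv => hN (Set.mem_toFinset.mp hv)
  have hdisj : Disjoint S N := Finset.disjoint_left.mpr fun v hvS hvN => by
    simpa [hS1 v hvS] using hN0 v hvN
  have hcross : ∀ ⦃u v⦄, G.Adj u v → u ∈ S ∪ N → v ∉ S ∪ N → 1 / 2 ≤ x v := by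
    intro u v huv hu hv
    rw [Finset.mem_union, not_or] at hv
    rcases Finset.mem_union.mp hu with hu | hu
    · have hv0 : x v ≠ 0 := fun hv0 => hv.2 <| Set.mem_toFinset.mpr <|
        Set.mem_iUnion₂.mpr ⟨u, Set.mem_toFinset.mp hu, huv, Or.inl ⟨hS1 u hu, hv0⟩⟩
      rcases hhalf v with h | h | h
      · exact absurd h hv0
      · exact h.ge
      · rw [h]; norm_num
    · linarith [hx.2 huv, hN0 u hu, (hx.1 v).2]
  have hgain : ∑ v ∈ S ∪ N, (1 / 2 - x v) = ((N.card : ℝ) - S.card) / 2 := by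
    rw [Finset.sum_union hdisj,
      Finset.sum_congr rfl (fun v hv => by rw [hS1 v hv] : ∀ v ∈ S, 1 / 2 - x v = 1 / 2 - 1),
      Finset.sum_congr rfl (fun v hv => by rw [hN0 v hv] : ∀ v ∈ N, 1 / 2 - x v = 1 / 2 - 0)]
    simp only [Finset.sum_const, nsmul_eq_mul]
    ring
  have hle := LPopt_le_fvcWeight_s3 (hx.piecewise_half (S ∪ N) hcross)
  rw [fvcWeight_piecewise_half, hgain, ← hopt] at hle
  have : (N.card : ℝ) < S.card := by exact_mod_cast hlt
  linarith

end

/-- For a half-integral optimal LP solution `x`, the bipartite subgraph between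
`V^x_1` and `V^x_0` has a matching saturating all of `V^x_1`. -/
theorem bipartite_matching_saturating_ones {V : Type} [Fintype V] (G : SimpleGraph V)
    (x : V → ℝ) (hx : IsFVC G x)
    (hhalf : ∀ v, x v = 0 ∨ x v = 1 / 2 ∨ x v = 1)
    (hopt : fvcWeight x = LPopt G) :
    ∃ M : Finset (Sym2 V), IsMatchingSet (bipartH G x) M ∧
      ∀ v, x v = 1 → Saturates M v := by
  obtain ⟨M, hones, hM⟩ := SimpleGraph.exists_isMatching_of_forall_ncard_le
    (isBipartiteWith_bipartH G x) fun _ hs =>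
      ncard_le_ncard_biUnion_neighborSet_bipartH hx hhalf hopt hs
  exact ⟨M.edgeSet.toFinset, hM.isMatchingSet, fun v hv => hM.saturates_of_mem_verts (hones hv)⟩
end

section
/- Let G be a finite simple graph, let O(G), I(G), P(G) be the parts of its Gallai-Edmonds decomposition, and let v, w be two distinct vertices of O(G) that lie in the same connected component of the induced subgraph G[O(G)]. Then MM(G − {v,w}) ≤ MM(G) − 1. -/
open scoped Classical

set_option linter.unusedSectionVars false

section Basic
variable {V : Type} [Fintype V] {G : SimpleGraph V}

lemma matchset_unique {M : Finset (Sym2 V)} (hM : IsMatchingSet G M) {e f : Sym2 V} {x : V}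
    (he : e ∈ M) (hf : f ∈ M) (hxe : x ∈ e) (hxf : x ∈ f) : e = f := by
  by_contra h
  exact hM.2 e he f hf h x hxe hxf

lemma mm_bdd : BddAbove {n : ℕ | ∃ M : Finset (Sym2 V), IsMatchingSet G M ∧ M.card = n} :=
  ⟨Fintype.card (Sym2 V), fun n ⟨M, _, hc⟩ => hc ▸ M.card_le_univ⟩

lemma le_mmnum {M : Finset (Sym2 V)} (hM : IsMatchingSet G M) : M.card ≤ MMnum G :=
  le_csSup mm_bdd ⟨M, hM, rfl⟩

lemma exists_mmnum : ∃ M : Finset (Sym2 V), IsMatchingSet G M ∧ M.card = MMnum G := by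
  have h0 : (0:ℕ) ∈ {n : ℕ | ∃ M : Finset (Sym2 V), IsMatchingSet G M ∧ M.card = n} :=
    ⟨∅, ⟨fun e he => absurd he (Finset.notMem_empty e),
      fun e he => absurd he (Finset.notMem_empty e)⟩, rfl⟩
  exact Nat.sSup_mem ⟨0, h0⟩ mm_bdd

/-- augmenting an edge between two unsaturated vertices -/
lemma augment {M : Finset (Sym2 V)} (hM : IsMatchingSet G M) {a b : V}
    (hab : G.Adj a b) (ha : ¬ Saturates M a) (hb : ¬ Saturates M b)
    (hMc : M.card = MMnum G) : False := by
  have hnm : s(a,b) ∉ M := fun h => ha ⟨_, h, Sym2.mem_mk_left a b⟩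
  have hmem : ∀ x : V, x ∈ (s(a,b) : Sym2 V) → x = a ∨ x = b := fun x hx => Sym2.mem_iff.1 hx
  have hmatch : IsMatchingSet G (insert s(a,b) M) := by
    constructor
    · intro e he
      rcases Finset.mem_insert.1 he with rfl | he
      · exact hab
      · exact hM.1 e he
    · intro e he f hf hef x hxe hxf
      rcases Finset.mem_insert.1 he with he' | he'
      · rcases Finset.mem_insert.1 hf with hf' | hf'
        · exact hef (he'.trans hf'.symm)
        · subst he'
          rcases hmem x hxe with rfl | rfl
          · exact ha ⟨f, hf', hxf⟩
          · exact hb ⟨f, hf', hxf⟩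
      · rcases Finset.mem_insert.1 hf with hf' | hf'
        · subst hf'
          rcases hmem x hxf with rfl | rfl
          · exact ha ⟨e, he', hxe⟩
          · exact hb ⟨e, he', hxe⟩
        · exact hM.2 e he' f hf' hef x hxe hxf
  have := le_mmnum hmatch
  rw [Finset.card_insert_of_notMem hnm, hMc] at this
  omega

end Basic

section SymmDiff
variable {V : Type} [Fintype V] {G : SimpleGraph V}

/-- symmetric difference of two edge sets -/
noncomputable def symmD (M N : Finset (Sym2 V)) : Finset (Sym2 V) := (M ∪ N) \ (M ∩ N)

lemma mem_symmD {M N : Finset (Sym2 V)} {e : Sym2 V} : e ∈ symmD M N ↔ (e ∈ M ∧ e ∉ N) ∨ (e ∈ N ∧ e ∉ M) := by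
  simp only [symmD, Finset.mem_sdiff, Finset.mem_union, Finset.mem_inter]
  tauto

lemma symmD_comm (M N : Finset (Sym2 V)) : symmD M N = symmD N M := by
  simp [symmD, Finset.union_comm, Finset.inter_comm]

/-- the symmetric difference graph -/
noncomputable def sdG (M N : Finset (Sym2 V)) : SimpleGraph V :=
  SimpleGraph.fromEdgeSet (symmD M N : Set (Sym2 V))

/-- the component of `w` in the symmetric difference graph -/
def comp (M N : Finset (Sym2 V)) (w : V) : Set V := {x | (sdG M N).Reachable w x}

/-- the edges of the component of `w` -/
noncomputable def ECset (M N : Finset (Sym2 V)) (w : V) : Finset (Sym2 V) :=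
  (symmD M N).filter (fun e => ∀ x ∈ e, x ∈ comp M N w)

lemma ECset_subset {M N : Finset (Sym2 V)} {w : V} : ECset M N w ⊆ symmD M N :=
  Finset.filter_subset _ _

lemma ECset_comm (M N : Finset (Sym2 V)) (w : V) : ECset M N w = ECset N M w := by
  unfold ECset comp sdG
  rw [symmD_comm]

lemma mem_comp_of_mem_ECset {M N : Finset (Sym2 V)} {w x : V} {e : Sym2 V}
    (he : e ∈ ECset M N w) (hx : x ∈ e) : x ∈ comp M N w :=
  (Finset.mem_filter.1 he).2 x hx

variable {M N : Finset (Sym2 V)}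

lemma symmD_not_diag (hM : IsMatchingSet G M) (hN : IsMatchingSet G N) {e : Sym2 V}
    (he : e ∈ symmD M N) : ¬ e.IsDiag := by
  rcases mem_symmD.1 he with ⟨h, _⟩ | ⟨h, _⟩
  · exact (SimpleGraph.not_isDiag_of_mem_edgeSet G (hM.1 e h))
  · exact (SimpleGraph.not_isDiag_of_mem_edgeSet G (hN.1 e h))

/-- closure: an edge of the symmetric difference with an endpoint in the component
of `w` lies in `ECset`. -/
lemma mem_ECset_of_mem_comp (hM : IsMatchingSet G M) (hN : IsMatchingSet G N) {w : V}
    {e : Sym2 V} (he : e ∈ symmD M N) {x : V} (hxe : x ∈ e) (hxC : x ∈ comp M N w) :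
    e ∈ ECset M N w := by
  induction e with
  | _ a b =>
    have hab : a ≠ b := by
      intro h
      exact symmD_not_diag hM hN he (by simp [h])
    have hadj : (sdG M N).Adj a b := by
      rw [sdG, SimpleGraph.fromEdgeSet_adj]
      exact ⟨he, hab⟩
    rcases Sym2.mem_iff.1 hxe with rfl | rfl
    · refine Finset.mem_filter.2 ⟨he, fun y hy => ?_⟩
      rcases Sym2.mem_iff.1 hy with rfl | rfl
      · exact hxC
      · exact hxC.trans hadj.reachable
    · refine Finset.mem_filter.2 ⟨he, fun y hy => ?_⟩
      rcases Sym2.mem_iff.1 hy with rfl | rfl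
      · exact hxC.trans hadj.symm.reachable
      · exact hxC

/-- membership characterization of the swapped matching -/
lemma mem_swap {w : V} {e : Sym2 V} :
    e ∈ (M \ ECset M N w) ∪ (ECset M N w \ M) ↔
      (e ∈ M ∧ e ∉ ECset M N w) ∨ (e ∈ ECset M N w ∧ e ∉ M) := by
  simp [Finset.mem_union, Finset.mem_sdiff]

/-- the swap of a matching along a union of components is a matching -/
lemma swap_isMatching (hM : IsMatchingSet G M) (hN : IsMatchingSet G N) (w : V) :
    IsMatchingSet G ((M \ ECset M N w) ∪ (ECset M N w \ M)) := by
  constructor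
  · intro e he
    rcases mem_swap.1 he with ⟨h, _⟩ | ⟨h, _⟩
    · exact hM.1 e h
    · rcases mem_symmD.1 (ECset_subset h) with ⟨h', _⟩ | ⟨h', _⟩
      · exact hM.1 e h'
      · exact hN.1 e h'
  · intro e he f hf hef x hxe hxf
    apply hef
    have key : ∀ g₁ g₂ : Sym2 V, g₁ ∈ M → g₁ ∉ ECset M N w →
        g₂ ∈ ECset M N w → g₂ ∉ M → x ∈ g₁ → x ∈ g₂ → g₁ = g₂ := by
      intro g₁ g₂ hg₁M hg₁E hg₂E hg₂M hxg₁ hxg₂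
      have hg₂N : g₂ ∈ N := by
        rcases mem_symmD.1 (ECset_subset hg₂E) with ⟨h', _⟩ | ⟨h', _⟩
        · exact absurd h' hg₂M
        · exact h'
      by_cases hg₁N : g₁ ∈ N
      · exact matchset_unique hN hg₁N hg₂N hxg₁ hxg₂
      · exfalso
        apply hg₁E
        exact mem_ECset_of_mem_comp hM hN (mem_symmD.2 (Or.inl ⟨hg₁M, hg₁N⟩)) hxg₁
          (mem_comp_of_mem_ECset hg₂E hxg₂)
    rcases mem_swap.1 he with ⟨heM, heE⟩ | ⟨heE, heM⟩ <;>
      rcases mem_swap.1 hf with ⟨hfM, hfE⟩ | ⟨hfE, hfM⟩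
    · exact matchset_unique hM heM hfM hxe hxf
    · exact key e f heM heE hfE hfM hxe hxf
    · exact (key f e hfM hfE heE heM hxf hxe).symm
    · have heN : e ∈ N := by
        rcases mem_symmD.1 (ECset_subset heE) with ⟨h', _⟩ | ⟨h', _⟩
        · exact absurd h' heM
        · exact h'
      have hfN : f ∈ N := by
        rcases mem_symmD.1 (ECset_subset hfE) with ⟨h', _⟩ | ⟨h', _⟩
        · exact absurd h' hfM
        · exact h'
      exact matchset_unique hN heN hfN hxe hxf

end SymmDiff

section Cards
variable {V : Type} [Fintype V] {G : SimpleGraph V} {M N : Finset (Sym2 V)}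

lemma EC_sdiff_M {w : V} {e : Sym2 V} (he : e ∈ ECset M N w) :
    e ∉ M ↔ e ∈ N := by
  rcases mem_symmD.1 (ECset_subset he) with ⟨h1, h2⟩ | ⟨h1, h2⟩
  · exact ⟨fun h => absurd h1 h, fun h => absurd h h2⟩
  · exact ⟨fun _ => h1, fun _ => h2⟩

/-- the swap of a maximum matching along the component edges is again maximum -/
lemma swap_card (hM : IsMatchingSet G M) (hN : IsMatchingSet G N)
    (hMc : M.card = MMnum G) (hNc : N.card = MMnum G) (w : V) :
    ((M \ ECset M N w) ∪ (ECset M N w \ M)).card = MMnum G := by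
  set E := ECset M N w with hE
  have hEcomm : ECset N M w = E := (ECset_comm M N w).symm
  have hdisj : ∀ A : Finset (Sym2 V), Disjoint (A \ E) (E \ A) :=
    fun A => Finset.disjoint_left.2
      (fun a ha hb => (Finset.mem_sdiff.1 ha).2 (Finset.mem_sdiff.1 hb).1)
  have hcardM : ((M \ E) ∪ (E \ M)).card = (M \ E).card + (E \ M).card :=
    Finset.card_union_of_disjoint (hdisj M)
  have hcardN : ((N \ E) ∪ (E \ N)).card = (N \ E).card + (E \ N).card :=
    Finset.card_union_of_disjoint (hdisj N)
  have h1 : (M \ E).card + (M ∩ E).card = M.card := Finset.card_sdiff_add_card_inter M E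
  have h2 : (N \ E).card + (N ∩ E).card = N.card := Finset.card_sdiff_add_card_inter N E
  have hMEN : M ∩ E = E \ N := by
    ext e
    simp only [Finset.mem_inter, Finset.mem_sdiff]
    constructor
    · intro ⟨h1', h2'⟩
      refine ⟨h2', fun hN' => ?_⟩
      rcases mem_symmD.1 (ECset_subset h2') with ⟨_, hh⟩ | ⟨_, hh⟩
      · exact hh hN'
      · exact hh h1'
    · intro ⟨h1', h2'⟩
      refine ⟨?_, h1'⟩
      rcases mem_symmD.1 (ECset_subset h1') with ⟨hh, _⟩ | ⟨hh, _⟩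
      · exact hh
      · exact absurd hh h2'
  have hNEM : N ∩ E = E \ M := by
    ext e
    simp only [Finset.mem_inter, Finset.mem_sdiff]
    constructor
    · intro ⟨h1', h2'⟩
      refine ⟨h2', fun hM' => ?_⟩
      rcases mem_symmD.1 (ECset_subset h2') with ⟨_, hh⟩ | ⟨_, hh⟩
      · exact hh h1'
      · exact hh hM'
    · intro ⟨h1', h2'⟩
      refine ⟨?_, h1'⟩
      rcases mem_symmD.1 (ECset_subset h1') with ⟨hh, _⟩ | ⟨hh, _⟩
      · exact absurd hh h2'
      · exact hh
  have ineqM : ((M \ E) ∪ (E \ M)).card ≤ MMnum G := le_mmnum (swap_isMatching hM hN w)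
  have ineqN : ((N \ E) ∪ (E \ N)).card ≤ MMnum G := by
    have := le_mmnum (swap_isMatching hN hM w)
    rwa [hEcomm] at this
  have e1 : (M ∩ E).card = (E \ N).card := by rw [hMEN]
  have e2 : (N ∩ E).card = (E \ M).card := by rw [hNEM]
  omega

/-- a vertex lies in at most one edge of a matching -/
lemma deg_le_one (hM : IsMatchingSet G M) (x : V) :
    (M.filter (fun e => x ∈ e)).card ≤ 1 :=
  Finset.card_le_one.2 (fun e he f hf =>
    matchset_unique hM (Finset.mem_filter.1 he).1 (Finset.mem_filter.1 hf).1
      (Finset.mem_filter.1 he).2 (Finset.mem_filter.1 hf).2)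

lemma degEC_le_two (hM : IsMatchingSet G M) (hN : IsMatchingSet G N) (w x : V) :
    ((ECset M N w).filter (fun e => x ∈ e)).card ≤ 2 := by
  have hsub : (ECset M N w).filter (fun e => x ∈ e) ⊆
      (M.filter (fun e => x ∈ e)) ∪ (N.filter (fun e => x ∈ e)) := by
    intro e he
    obtain ⟨heE, hxe⟩ := Finset.mem_filter.1 he
    rcases mem_symmD.1 (ECset_subset heE) with ⟨h, _⟩ | ⟨h, _⟩
    · exact Finset.mem_union_left _ (Finset.mem_filter.2 ⟨h, hxe⟩)
    · exact Finset.mem_union_right _ (Finset.mem_filter.2 ⟨h, hxe⟩)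
  calc ((ECset M N w).filter (fun e => x ∈ e)).card
      ≤ ((M.filter (fun e => x ∈ e)) ∪ (N.filter (fun e => x ∈ e))).card :=
        Finset.card_le_card hsub
    _ ≤ (M.filter (fun e => x ∈ e)).card + (N.filter (fun e => x ∈ e)).card :=
        Finset.card_union_le _ _
    _ ≤ 2 := by have := deg_le_one hM x; have := deg_le_one hN x; omega

lemma degEC_le_one_left (hN : IsMatchingSet G N) (w : V) {x : V}
    (hx : ¬ Saturates M x) :
    ((ECset M N w).filter (fun e => x ∈ e)).card ≤ 1 := by
  have hsub : (ECset M N w).filter (fun e => x ∈ e) ⊆ N.filter (fun e => x ∈ e) := by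
    intro e he
    obtain ⟨heE, hxe⟩ := Finset.mem_filter.1 he
    rcases mem_symmD.1 (ECset_subset heE) with ⟨h, _⟩ | ⟨h, _⟩
    · exact absurd ⟨e, h, hxe⟩ hx
    · exact Finset.mem_filter.2 ⟨h, hxe⟩
  exact le_trans (Finset.card_le_card hsub) (deg_le_one hN x)

lemma degEC_le_one_right (hM : IsMatchingSet G M) (w : V) {x : V}
    (hx : ¬ Saturates N x) :
    ((ECset M N w).filter (fun e => x ∈ e)).card ≤ 1 := by
  have hsub : (ECset M N w).filter (fun e => x ∈ e) ⊆ M.filter (fun e => x ∈ e) := by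
    intro e he
    obtain ⟨heE, hxe⟩ := Finset.mem_filter.1 he
    rcases mem_symmD.1 (ECset_subset heE) with ⟨h, _⟩ | ⟨h, _⟩
    · exact Finset.mem_filter.2 ⟨h, hxe⟩
    · exact absurd ⟨e, h, hxe⟩ hx
  exact le_trans (Finset.card_le_card hsub) (deg_le_one hM x)

end Cards

section Counting
variable {V : Type} [Fintype V] {G : SimpleGraph V} {M N : Finset (Sym2 V)}

lemma fiber_two (hM : IsMatchingSet G M) (hN : IsMatchingSet G N) {w : V} {e : Sym2 V}
    (he : e ∈ ECset M N w) :
    ((Finset.univ.filter (fun x : V => x ∈ comp M N w)).filter (fun x => x ∈ e)).card = 2 := by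
  induction e with
  | _ a b =>
    have hab : a ≠ b := by
      intro h
      exact symmD_not_diag hM hN (ECset_subset he) (by simp [h])
    have ha : a ∈ comp M N w := mem_comp_of_mem_ECset he (Sym2.mem_mk_left a b)
    have hb : b ∈ comp M N w := mem_comp_of_mem_ECset he (Sym2.mem_mk_right a b)
    have heq : (Finset.univ.filter (fun x : V => x ∈ comp M N w)).filter
        (fun x => x ∈ (s(a, b) : Sym2 V)) = {a, b} := by
      ext x
      simp only [Finset.mem_filter, Finset.mem_univ, true_and, Sym2.mem_iff,
        Finset.mem_insert, Finset.mem_singleton]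
      constructor
      · exact fun h => h.2
      · rintro (rfl | rfl)
        · exact ⟨ha, Or.inl rfl⟩
        · exact ⟨hb, Or.inr rfl⟩
    rw [heq, Finset.card_pair hab]

lemma handshake (hM : IsMatchingSet G M) (hN : IsMatchingSet G N) (w : V) :
    ∑ x ∈ Finset.univ.filter (fun x : V => x ∈ comp M N w),
      ((ECset M N w).filter (fun e => x ∈ e)).card = 2 * (ECset M N w).card := by
  set Cf := Finset.univ.filter (fun x : V => x ∈ comp M N w) with hCf
  have h1 : ∀ x, ((ECset M N w).filter (fun e => x ∈ e)).card =
      ∑ e ∈ ECset M N w, if x ∈ e then 1 else 0 := fun x => Finset.card_filter _ _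
  calc ∑ x ∈ Cf, ((ECset M N w).filter (fun e => x ∈ e)).card
      = ∑ x ∈ Cf, ∑ e ∈ ECset M N w, if x ∈ e then 1 else 0 := by
        exact Finset.sum_congr rfl (fun x _ => h1 x)
    _ = ∑ e ∈ ECset M N w, ∑ x ∈ Cf, if x ∈ e then 1 else 0 := Finset.sum_comm
    _ = ∑ e ∈ ECset M N w, (Cf.filter (fun x => x ∈ e)).card := by
        exact Finset.sum_congr rfl (fun e _ => (Finset.card_filter _ _).symm)
    _ = ∑ _e ∈ ECset M N w, 2 :=
        Finset.sum_congr rfl (fun e heE => fiber_two hM hN heE)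
    _ = 2 * (ECset M N w).card := by rw [Finset.sum_const, smul_eq_mul, Nat.mul_comm]

lemma comp_card_le (hM : IsMatchingSet G M) (hN : IsMatchingSet G N) (w : V) :
    (Finset.univ.filter (fun x : V => x ∈ comp M N w)).card ≤ (ECset M N w).card + 1 := by
  set S := sdG M N with hS
  set Cf := Finset.univ.filter (fun x : V => x ∈ comp M N w) with hCf
  have key : ∀ x : V, ∃ y : V, x ∈ Cf.erase w → S.Adj x y ∧ S.dist w y + 1 = S.dist w x := by
    intro x
    by_cases hx : x ∈ Cf.erase w
    · have hxw : x ≠ w := (Finset.mem_erase.1 hx).1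
      have hxC : x ∈ comp M N w :=
        (Finset.mem_filter.1 (Finset.mem_erase.1 hx).2).2
      have hr : S.Reachable w x := hxC
      have hd0 : S.dist w x ≠ 0 :=
        SimpleGraph.dist_ne_zero_iff_ne_and_reachable.2 ⟨Ne.symm hxw, hr⟩
      obtain ⟨p, hp⟩ := hr.symm.exists_walk_length_eq_dist
      cases p with
      | nil =>
        exfalso
        rw [SimpleGraph.dist_comm] at hd0
        simp only [SimpleGraph.Walk.length_nil] at hp
        exact hd0 hp.symm
      | @cons _ y _ h q =>
        refine ⟨y, fun _ => ⟨h, ?_⟩⟩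
        have h1 : S.dist w y ≤ q.length := by
          rw [SimpleGraph.dist_comm]
          exact SimpleGraph.dist_le q
        have h2 : S.dist w x ≤ S.dist w y + 1 := by
          have hry : S.Reachable w y := hr.trans h.reachable
          obtain ⟨r, hrlen⟩ := hry.exists_walk_length_eq_dist
          have := SimpleGraph.dist_le (r.concat h.symm)
          rw [SimpleGraph.Walk.length_concat, hrlen] at this
          exact this
        have h3 : q.length + 1 = S.dist w x := by
          rw [SimpleGraph.dist_comm]
          simpa [SimpleGraph.Walk.length_cons] using hp
        omega
    · exact ⟨w, fun hx' => absurd hx' hx⟩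
  choose Y hY using key
  have hinj : (Cf.erase w).card ≤ (ECset M N w).card := by
    apply Finset.card_le_card_of_injOn (fun x => s(x, Y x))
    · intro x hx
      obtain ⟨hadj, _⟩ := hY x hx
      have hxC : x ∈ comp M N w :=
        (Finset.mem_filter.1 (Finset.mem_erase.1 hx).2).2
      have hmem : (s(x, Y x) : Sym2 V) ∈ symmD M N := by
        rw [hS, sdG, SimpleGraph.fromEdgeSet_adj] at hadj
        exact hadj.1
      exact mem_ECset_of_mem_comp hM hN hmem (Sym2.mem_mk_left _ _) hxC
    · intro x₁ hx₁ x₂ hx₂ heq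
      rcases Sym2.eq_iff.1 heq with ⟨h1, _⟩ | ⟨h1, h2⟩
      · exact h1
      · exfalso
        obtain ⟨_, hd1⟩ := hY x₁ (Finset.mem_coe.1 hx₁)
        obtain ⟨_, hd2⟩ := hY x₂ (Finset.mem_coe.1 hx₂)
        rw [← h1] at hd2
        rw [h2] at hd1
        omega
  have hwCf : w ∈ Cf := Finset.mem_filter.2 ⟨Finset.mem_univ w, SimpleGraph.Reachable.refl w⟩
  have := Finset.card_erase_add_one hwCf
  omega

/-- three independent "endpoints" in the component of `w` is impossible -/
lemma three_endpoints (hM : IsMatchingSet G M) (hN : IsMatchingSet G N)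
    {w v u : V} (hvw : v ≠ w) (hvu : v ≠ u) (huw : u ≠ w)
    (hMv : ¬ Saturates M v) (hMw : ¬ Saturates M w) (hNu : ¬ Saturates N u)
    (hvC : v ∈ comp M N w) (huC : u ∈ comp M N w) : False := by
  set Cf := Finset.univ.filter (fun x : V => x ∈ comp M N w) with hCf
  set T : Finset V := {v, w, u} with hT
  have hTsub : T ⊆ Cf := by
    intro x hx
    rcases Finset.mem_insert.1 hx with rfl | hx
    · exact Finset.mem_filter.2 ⟨Finset.mem_univ _, hvC⟩
    rcases Finset.mem_insert.1 hx with rfl | hx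
    · exact Finset.mem_filter.2 ⟨Finset.mem_univ _, SimpleGraph.Reachable.refl _⟩
    rw [Finset.mem_singleton] at hx
    subst hx
    exact Finset.mem_filter.2 ⟨Finset.mem_univ _, huC⟩
  have hTcard : T.card = 3 := by
    rw [hT]
    rw [Finset.card_insert_of_notMem (by simp [hvw, hvu]),
      Finset.card_insert_of_notMem (by simp [Ne.symm huw]), Finset.card_singleton]
  have hsplit : ∑ x ∈ Cf \ T, ((ECset M N w).filter (fun e => x ∈ e)).card
      + ∑ x ∈ T, ((ECset M N w).filter (fun e => x ∈ e)).card
      = ∑ x ∈ Cf, ((ECset M N w).filter (fun e => x ∈ e)).card :=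
    Finset.sum_sdiff hTsub
  have hTle : ∑ x ∈ T, ((ECset M N w).filter (fun e => x ∈ e)).card ≤ 3 := by
    have hb : ∀ x ∈ T, ((ECset M N w).filter (fun e => x ∈ e)).card ≤ 1 := by
      intro x hx
      rcases Finset.mem_insert.1 hx with rfl | hx
      · exact degEC_le_one_left hN _ hMv
      rcases Finset.mem_insert.1 hx with rfl | hx
      · exact degEC_le_one_left hN _ hMw
      rw [Finset.mem_singleton] at hx
      subst hx
      exact degEC_le_one_right hM _ hNu
    have := Finset.sum_le_card_nsmul T _ 1 hb
    rw [hTcard] at this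
    simpa using this
  have hRle : ∑ x ∈ Cf \ T, ((ECset M N w).filter (fun e => x ∈ e)).card
      ≤ 2 * (Cf \ T).card := by
    have := Finset.sum_le_card_nsmul (Cf \ T) _ 2 (fun x _ => degEC_le_two hM hN w x)
    simpa [Nat.mul_comm] using this
  have hhs := handshake hM hN w
  have hlow := comp_card_le hM hN w
  have hc : (Cf \ T).card + T.card = Cf.card := Finset.card_sdiff_add_card_eq_card hTsub
  rw [← hCf] at hhs hlow
  omega

end Counting

section Step
variable {V : Type} [Fintype V] {G : SimpleGraph V}

lemma mem_swap' {A B : Finset (Sym2 V)} {e : Sym2 V} :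
    e ∈ (A \ B) ∪ (B \ A) ↔ (e ∈ A ∧ e ∉ B) ∨ (e ∈ B ∧ e ∉ A) := by
  simp [Finset.mem_union, Finset.mem_sdiff]

/-- Key step: given a maximum matching `M` missing `v` and `w`, and `u` adjacent to `v`
with a maximum matching `N` missing `u`, produce a maximum matching missing
both `u` and `w`. -/
lemma step {M N : Finset (Sym2 V)} (hM : IsMatchingSet G M) (hN : IsMatchingSet G N)
    (hMc : M.card = MMnum G) (hNc : N.card = MMnum G) {v w u : V}
    (hvw : v ≠ w) (adj : G.Adj v u)
    (hMv : ¬ Saturates M v) (hMw : ¬ Saturates M w) (hNu : ¬ Saturates N u) :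
    ∃ K : Finset (Sym2 V), IsMatchingSet G K ∧ K.card = MMnum G ∧
      ¬ Saturates K u ∧ ¬ Saturates K w := by
  have hvu : v ≠ u := G.ne_of_adj adj
  by_cases hMu : Saturates M u
  swap
  · exact absurd (augment hM adj hMv hMu hMc) not_false
  by_cases hNw : Saturates N w
  swap
  · exact ⟨N, hN, hNc, hNu, hNw⟩
  have huw : u ≠ w := by
    intro h
    exact hMw (h ▸ hMu)
  obtain ⟨f, hfM, huf⟩ := hMu
  -- the `N`-swap along the component of `w`
  have hNSE : ECset N M w = ECset M N w := ECset_comm N M w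
  have hNSrw : (N \ ECset N M w) ∪ (ECset N M w \ N)
      = (N \ ECset M N w) ∪ (ECset M N w \ N) := by rw [hNSE]
  have hNSmatch : IsMatchingSet G ((N \ ECset M N w) ∪ (ECset M N w \ N)) :=
    hNSrw ▸ swap_isMatching hN hM w
  have hNScard : ((N \ ECset M N w) ∪ (ECset M N w \ N)).card = MMnum G :=
    hNSrw ▸ swap_card hN hM hNc hMc w
  -- the `N`-swap misses `w`
  have hNSw : ¬ Saturates ((N \ ECset M N w) ∪ (ECset M N w \ N)) w := by
    rintro ⟨e, heNS, hwe⟩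
    rcases mem_swap'.1 heNS with ⟨heN, heE⟩ | ⟨heE, heN⟩
    · apply heE
      have heD : e ∈ symmD M N :=
        mem_symmD.2 (Or.inr ⟨heN, fun heM => hMw ⟨e, heM, hwe⟩⟩)
      exact mem_ECset_of_mem_comp hM hN heD hwe (SimpleGraph.Reachable.refl w)
    · have heM : e ∈ M := by
        rcases mem_symmD.1 (ECset_subset heE) with ⟨h, _⟩ | ⟨h, _⟩
        · exact h
        · exact absurd h heN
      exact hMw ⟨e, heM, hwe⟩
  by_cases hfE : f ∈ ECset M N w
  · -- bad case: `u`'s M-edge lies in the component of `w`; use the M-swap and counting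
    exfalso
    have hMSmatch : IsMatchingSet G ((M \ ECset M N w) ∪ (ECset M N w \ M)) :=
      swap_isMatching hM hN w
    have hMScard : ((M \ ECset M N w) ∪ (ECset M N w \ M)).card = MMnum G :=
      swap_card hM hN hMc hNc w
    have hMSu : ¬ Saturates ((M \ ECset M N w) ∪ (ECset M N w \ M)) u := by
      rintro ⟨e, heMS, hue⟩
      rcases mem_swap'.1 heMS with ⟨heM, heE⟩ | ⟨heE, heM⟩
      · exact heE (matchset_unique hM heM hfM hue huf ▸ hfE)
      · have heN : e ∈ N := (EC_sdiff_M heE).1 heM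
        exact hNu ⟨e, heN, hue⟩
    by_cases hMSv : Saturates ((M \ ECset M N w) ∪ (ECset M N w \ M)) v
    · -- then `v` lies in the component: counting contradiction
      obtain ⟨e, heMS, hve⟩ := hMSv
      rcases mem_swap'.1 heMS with ⟨heM, _⟩ | ⟨heE, _⟩
      · exact hMv ⟨e, heM, hve⟩
      · have hvC : v ∈ comp M N w := mem_comp_of_mem_ECset heE hve
        have huC : u ∈ comp M N w := mem_comp_of_mem_ECset hfE huf
        exact three_endpoints hM hN hvw hvu huw hMv hMw hNu hvC huC
    · -- the M-swap misses both `v` and `u`, which are adjacent: augment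
      exact augment hMSmatch adj hMSv hMSu hMScard
  · -- good case: the N-swap misses `u` as well
    refine ⟨_, hNSmatch, hNScard, ?_, hNSw⟩
    rintro ⟨e, heNS, hue⟩
    rcases mem_swap'.1 heNS with ⟨heN, _⟩ | ⟨heE, heN⟩
    · exact hNu ⟨e, heN, hue⟩
    · have heM : e ∈ M := by
        rcases mem_symmD.1 (ECset_subset heE) with ⟨h, _⟩ | ⟨h, _⟩
        · exact h
        · exact absurd h heN
      have hef : e = f := matchset_unique hM heM hfM hue huf
      exact hfE (hef ▸ heE)

end Step

section Core
variable {V : Type} [Fintype V] {G : SimpleGraph V}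

lemma core (n : ℕ) : ∀ (a b : ↥(OSet G)) (p : (G.induce (OSet G)).Walk a b),
    p.length ≤ n → ∀ M : Finset (Sym2 V), IsMatchingSet G M → M.card = MMnum G →
    ¬ Saturates M a.1 → ¬ Saturates M b.1 → a.1 ≠ b.1 → False := by
  induction n with
  | zero =>
    intro a b p hp M hM hMc ha hb hab
    cases p with
    | nil => exact hab rfl
    | cons h q => simp [SimpleGraph.Walk.length_cons] at hp
  | succ n ih =>
    intro a b p hp M hM hMc ha hb hab
    cases p with
    | nil => exact hab rfl
    | @cons _ c _ h q =>
      have adj : G.Adj a.1 c.1 := h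
      by_cases hcb : c.1 = b.1
      · -- then `c` is missed by `M` and adjacent to `a`: augment
        exact augment hM adj ha (hcb ▸ hb) hMc
      · obtain ⟨N, hN, hNc, hNu⟩ := c.2
        obtain ⟨K, hK, hKc, hKu, hKb⟩ := step hM hN hMc hNc hab adj ha hb hNu
        have hq : q.length ≤ n := by
          simp only [SimpleGraph.Walk.length_cons] at hp
          omega
        exact ih c b q hq K hK hKc hKu hKb hcb

end Core

/-- Deleting two vertices of the same component of `G[O(G)]` drops the matching
number by at least one. -/
theorem mm_drop_two_in_O_component {V : Type} [Fintype V] (G : SimpleGraph V)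
    (v w : V) (hv : v ∈ OSet G) (hw : w ∈ OSet G) (hvw : v ≠ w)
    (hcomp : (G.induce (OSet G)).Reachable ⟨v, hv⟩ ⟨w, hw⟩) :
    MMnum (G.induce ({v, w}ᶜ : Set V)) + 1 ≤ MMnum G := by
  by_contra hcon
  push_neg at hcon
  have hcon' : MMnum G ≤ MMnum (G.induce ({v, w}ᶜ : Set V)) := Nat.lt_succ_iff.1 hcon
  obtain ⟨M₀, hM₀, hM₀c⟩ := exists_mmnum (G := G.induce ({v, w}ᶜ : Set V))
  set emb : Sym2 ↥({v, w}ᶜ : Set V) ↪ Sym2 V :=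
    ⟨Sym2.map Subtype.val, Sym2.map.injective Subtype.val_injective⟩ with hemb
  set M : Finset (Sym2 V) := M₀.map emb with hMdef
  have hnotvw : ∀ x : V, (∃ e ∈ M, x ∈ e) → x ≠ v ∧ x ≠ w := by
    rintro x ⟨e, he, hxe⟩
    obtain ⟨e₀, he₀, rfl⟩ := Finset.mem_map.1 he
    obtain ⟨y, _, hyx⟩ := Sym2.mem_map.1 hxe
    have hy2 := y.2
    rw [hyx] at hy2
    simp only [Set.mem_compl_iff, Set.mem_insert_iff, Set.mem_singleton_iff, not_or] at hy2
    exact hy2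
  have hMmatch : IsMatchingSet G M := by
    constructor
    · intro e he
      obtain ⟨e₀, he₀, rfl⟩ := Finset.mem_map.1 he
      induction e₀ with
      | _ a b =>
        have hadj : (G.induce ({v, w}ᶜ : Set V)).Adj a b :=
          (SimpleGraph.mem_edgeSet _).1 (hM₀.1 _ he₀)
        exact (SimpleGraph.mem_edgeSet _).2 hadj
    · intro e he f hf hef x hxe hxf
      obtain ⟨e₀, he₀, rfl⟩ := Finset.mem_map.1 he
      obtain ⟨f₀, hf₀, rfl⟩ := Finset.mem_map.1 hf
      have hne : e₀ ≠ f₀ := fun hh => hef (by rw [hh])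
      obtain ⟨y, hy, hyx⟩ := Sym2.mem_map.1 hxe
      obtain ⟨z, hz, hzx⟩ := Sym2.mem_map.1 hxf
      have hyz : y = z := Subtype.ext (hyx.trans hzx.symm)
      exact hM₀.2 e₀ he₀ f₀ hf₀ hne y hy (hyz ▸ hz)
  have hMv : ¬ Saturates M v := fun hs => (hnotvw v hs).1 rfl
  have hMw : ¬ Saturates M w := fun hs => (hnotvw w hs).2 rfl
  have hMcard : M.card = M₀.card := Finset.card_map _
  have hle : M.card ≤ MMnum G := le_mmnum hMmatch
  have hMmax : M.card = MMnum G := le_antisymm hle (by rw [hMcard, hM₀c]; exact hcon')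
  obtain ⟨p⟩ := hcomp
  exact core p.length ⟨v, hv⟩ ⟨w, hw⟩ p le_rfl M hMmatch hMmax hMv hMw hvw
end

section
/- Let G be a finite simple graph with surplus(G) ≥ 2, let O(G), I(G), P(G) be the parts of its Gallai-Edmonds decomposition, and suppose I(G) ∪ P(G) is an independent set in G. Let o, v ∈ O(G) be adjacent vertices, let G' = G − {o}, and let O(G'), I(G'), P(G') be the parts of the Gallai-Edmonds decomposition of G'. Then the induced subgraph of G' on P(G') contains at least one edge. -/
open scoped Classical

/-!
Let `M` be a maximum matching missing `o`. Then `v` is matched by `M`, say to `w`, and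
`M - vw + ov` is a maximum matching missing `w`, so `o v w` is a path in `G[O(G)]`.
Gallai's lemma says that no maximum matching misses two distinct vertices of one component of
`G[O(G)]`: if `M` misses `a` and `b`, and `x` is the neighbour of `a` on a path to `b`, take a
maximum matching `N` missing `x` with `|M ∩ N|` maximal; by induction `N` covers `b`, and the
alternating path of `M △ N` starting at `b` either ends at `x`, and switching `M` along it
gives a maximum matching missing both `a` and its neighbour `x`, or it does not, and switching
`N` along it increases `|M ∩ N|`.
Since `G - o` has the same matching number as `G`, its maximum matchings are the maximum matchings
of `G` missing `o`. Hence no vertex of the component of `o` in `G[O(G)]` lies in `O(G - o)`, nor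
does any neighbour of it, so `v` and `w` both lie in `P(G - o)`.
-/

open Finset

section CardInter

variable {α : Type*} [DecidableEq α] {A B : Finset α} {e f : α}

lemma card_insert_erase_inter_le (e f : α) (A B : Finset α) :
    #(insert e (A.erase f) ∩ B) ≤ #(A ∩ B) + 1 :=
  calc #(insert e (A.erase f) ∩ B)
      ≤ #(insert e (A ∩ B)) := card_le_card fun x hx => by
        simp only [mem_inter, mem_insert, mem_erase] at hx ⊢
        tauto
    _ ≤ #(A ∩ B) + 1 := card_insert_le _ _

lemma card_insert_erase_inter (heB : e ∈ B) (heA : e ∉ A) (hf : f ∉ B) :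
    #(insert e (A.erase f) ∩ B) = #(A ∩ B) + 1 := by
  rw [insert_inter_of_mem heB, erase_inter,
    erase_eq_of_notMem fun h => hf (mem_inter.mp h).2,
    card_insert_of_notMem fun h => heA (mem_inter.mp h).1]

end CardInter

section Matching

variable {V : Type} {G : SimpleGraph V} {M N : Finset (Sym2 V)} {e : Sym2 V} {a b v : V}

structure IsMaxMatching (G : SimpleGraph V) (M : Finset (Sym2 V)) : Prop where
  isMatchingSet : IsMatchingSet G M
  card_eq : M.card = MMnum G

lemma mem_OSet_iff : v ∈ OSet G ↔ ∃ M, IsMaxMatching G M ∧ ¬ Saturates M v :=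
  ⟨fun ⟨M, hM, hc, hv⟩ => ⟨M, ⟨hM, hc⟩, hv⟩,
    fun ⟨M, hM, hv⟩ => ⟨M, hM.1, hM.2, hv⟩⟩

lemma saturates_insert_iff : Saturates (insert e M) v ↔ v ∈ e ∨ Saturates M v := by
  simp [Saturates]

lemma Saturates.of_erase (h : Saturates (M.erase e) v) : Saturates M v :=
  let ⟨f, hf, hvf⟩ := h
  ⟨f, mem_of_mem_erase hf, hvf⟩

lemma Saturates.exists_mk_mem (h : Saturates M v) : ∃ w, s(v, w) ∈ M := by
  obtain ⟨e, he, hve⟩ := h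
  obtain ⟨w, rfl⟩ := Sym2.mem_iff_exists.mp hve
  exact ⟨w, he⟩

namespace IsMatchingSet

lemma adj (hM : IsMatchingSet G M) (h : s(a, b) ∈ M) : G.Adj a b :=
  G.mem_edgeSet.mp (hM.1 _ h)

lemma subset (hN : IsMatchingSet G N) (h : M ⊆ N) : IsMatchingSet G M :=
  ⟨fun e he => hN.1 e (h he), fun e he f hf => hN.2 e (h he) f (h hf)⟩

lemma eq_of_mem_of_mem {f : Sym2 V} (hM : IsMatchingSet G M) (he : e ∈ M) (hf : f ∈ M)
    (hve : v ∈ e) (hvf : v ∈ f) : e = f := by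
  by_contra hef
  exact hM.2 e he f hf hef v hve hvf

lemma not_saturates_erase (hM : IsMatchingSet G M) (he : e ∈ M) (hv : v ∈ e) :
    ¬ Saturates (M.erase e) v := fun ⟨_, hf, hvf⟩ =>
  ne_of_mem_erase hf (hM.eq_of_mem_of_mem (mem_of_mem_erase hf) he hvf hv)

lemma insert (hM : IsMatchingSet G M) (hab : G.Adj a b) (ha : ¬ Saturates M a)
    (hb : ¬ Saturates M b) : IsMatchingSet G (insert s(a, b) M) := by
  have hfree : ∀ f ∈ M, ∀ u ∈ s(a, b), u ∉ f := by
    rintro f hf u hu huf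
    rcases Sym2.mem_iff.mp hu with rfl | rfl
    exacts [ha ⟨f, hf, huf⟩, hb ⟨f, hf, huf⟩]
  refine ⟨fun e he => ?_, fun e he f hf hef u hue huf => ?_⟩
  · rcases mem_insert.mp he with rfl | he
    exacts [G.mem_edgeSet.mpr hab, hM.1 e he]
  · rcases mem_insert.mp he with rfl | he <;> rcases mem_insert.mp hf with rfl | hf
    · exact hef rfl
    · exact hfree f hf u hue huf
    · exact hfree e he u huf hue
    · exact hM.2 e he f hf hef u hue huf

lemma card_le_MMnum [Fintype V] (hM : IsMatchingSet G M) : M.card ≤ MMnum G := by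
  refine le_csSup ⟨Fintype.card (Sym2 V), ?_⟩ ⟨M, hM, rfl⟩
  rintro n ⟨N, -, rfl⟩
  exact card_le_univ N

end IsMatchingSet

namespace IsMaxMatching

lemma saturates_of_adj [Fintype V] (hM : IsMaxMatching G M) (hab : G.Adj a b)
    (ha : ¬ Saturates M a) : Saturates M b := by
  by_contra hb
  have hab_notMem : s(a, b) ∉ M := fun h => ha ⟨_, h, Sym2.mem_mk_left a b⟩
  have := (hM.1.insert hab ha hb).card_le_MMnum
  rw [card_insert_of_notMem hab_notMem, hM.2] at this
  omega

lemma swap {x y z : V} (hM : IsMaxMatching G M) (hxy : G.Adj x y) (hx : ¬ Saturates M x)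
    (hyz : s(y, z) ∈ M) :
    IsMaxMatching G (insert s(x, y) (M.erase s(y, z))) ∧
      ¬ Saturates (insert s(x, y) (M.erase s(y, z))) z ∧
      ∀ v, ¬ Saturates M v → v ≠ x →
        ¬ Saturates (insert s(x, y) (M.erase s(y, z))) v := by
  have hyz_adj := hM.1.adj hyz
  have hxy_notMem : s(x, y) ∉ M.erase s(y, z) :=
    fun h => hx ⟨_, mem_of_mem_erase h, Sym2.mem_mk_left x y⟩
  have hy : ¬ Saturates (M.erase s(y, z)) y :=
    hM.1.not_saturates_erase hyz (Sym2.mem_mk_left y z)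
  refine ⟨⟨(hM.1.subset (erase_subset _ M)).insert hxy (fun h => hx h.of_erase) hy, ?_⟩,
    ?_, fun v hv hvx => ?_⟩
  · rw [card_insert_of_notMem hxy_notMem, card_erase_of_mem hyz, ← hM.2]
    have : 0 < M.card := card_pos.mpr ⟨_, hyz⟩
    omega
  · rw [saturates_insert_iff, Sym2.mem_iff, not_or, not_or]
    refine ⟨⟨?_, hyz_adj.ne'⟩, hM.1.not_saturates_erase hyz (Sym2.mem_mk_right y z)⟩
    rintro rfl
    exact hx ⟨_, hyz, Sym2.mem_mk_right y _⟩
  · rw [saturates_insert_iff, Sym2.mem_iff, not_or, not_or]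
    refine ⟨⟨hvx, ?_⟩, fun h => hv h.of_erase⟩
    rintro rfl
    exact hv ⟨_, hyz, Sym2.mem_mk_left v z⟩

/-- The alternating path of `M △ N` from `b` is followed one step at a time: `M` is switched along
its first two edges `bc ∈ N`, `cd ∈ M`, and the search continues from `d`. -/
lemma exists_exchange [Fintype V] {M : Finset (Sym2 V)} {b : V} (hM : IsMaxMatching G M)
    (hN : IsMaxMatching G N) (hbM : ¬ Saturates M b) (hbN : Saturates N b) :
    ∃ y, ¬ Saturates N y ∧
      (∃ M', IsMaxMatching G M' ∧ ¬ Saturates M' y ∧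
        ∀ v, ¬ Saturates M v → v ≠ b → ¬ Saturates M' v) ∧
      ∃ N', IsMaxMatching G N' ∧ (∀ v, ¬ Saturates N v → v ≠ y → ¬ Saturates N' v) ∧
        #(M ∩ N) < #(M ∩ N') := by
  obtain ⟨c, hbc⟩ := hbN.exists_mk_mem
  obtain ⟨d, hcd⟩ := (hM.saturates_of_adj (hN.1.adj hbc) hbM).exists_mk_mem
  have hcb : s(c, b) ∈ N := Sym2.eq_swap ▸ hbc
  have hdb : d ≠ b := by
    rintro rfl
    exact hbM ⟨_, hcd, Sym2.mem_mk_right c d⟩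
  have hcd_notMem : s(c, d) ∉ N := fun h =>
    hdb (Sym2.congr_right.mp (hN.1.eq_of_mem_of_mem h hcb (Sym2.mem_mk_left c d)
      (Sym2.mem_mk_left c b)))
  have hbc_notMem : s(b, c) ∉ M := fun h => hbM ⟨_, h, Sym2.mem_mk_left b c⟩
  obtain ⟨hM₁, hM₁d, hM₁pres⟩ := hM.swap (hN.1.adj hbc) hbM hcd
  set M₁ := insert s(b, c) (M.erase s(c, d))
  by_cases hdN : Saturates N d
  · have hdec : #N - #(M₁ ∩ N) < #N - #(M ∩ N) := by
      have hcard : #(M₁ ∩ N) = #(M ∩ N) + 1 :=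
        card_insert_erase_inter hbc hbc_notMem hcd_notMem
      have := card_le_card (s := M₁ ∩ N) inter_subset_right
      omega
    obtain ⟨y, hyN, ⟨M', hM', hM'y, hM'pres⟩, N', hN', hN'pres, hN'card⟩ :=
      hM₁.exists_exchange hN hM₁d hdN
    refine ⟨y, hyN, ⟨M', hM', hM'y, fun v hv hvb => hM'pres v (hM₁pres v hv hvb) ?_⟩,
      N', hN', hN'pres, ?_⟩
    · rintro rfl
      exact hv ⟨_, hcd, Sym2.mem_mk_right c v⟩
    · have : #(M₁ ∩ N') ≤ #(M ∩ N') + 1 := card_insert_erase_inter_le _ _ _ _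
      omega
  · obtain ⟨hN₁, -, hN₁pres⟩ := hN.swap (hM.1.adj hcd).symm hdN hcb
    refine ⟨d, hdN, ⟨M₁, hM₁, hM₁d, hM₁pres⟩, _, hN₁, hN₁pres, ?_⟩
    have : #(insert s(d, c) (N.erase s(c, b)) ∩ M) = #(N ∩ M) + 1 :=
      card_insert_erase_inter (by rwa [Sym2.eq_swap]) (by rwa [Sym2.eq_swap])
        (by rwa [Sym2.eq_swap])
    rw [inter_comm M (insert _ _), this, inter_comm N]
    exact lt_add_one _
termination_by #N - #(M ∩ N)
decreasing_by exact hdec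

end IsMaxMatching

/-- The induced subgraph `G[O(G)]`, as a graph on all of `V`. -/
def OGraph (G : SimpleGraph V) : SimpleGraph V where
  Adj a b := a ∈ OSet G ∧ b ∈ OSet G ∧ G.Adj a b
  symm := ⟨fun _ _ h => ⟨h.2.1, h.1, h.2.2.symm⟩⟩
  loopless := ⟨fun _ h => h.2.2.ne rfl⟩

lemma OGraph_adj : (OGraph G).Adj a b ↔ a ∈ OSet G ∧ b ∈ OSet G ∧ G.Adj a b := Iff.rfl

end Matching

section Gallai

variable {V : Type} [Fintype V] {G : SimpleGraph V}

lemma exists_isMaxMatching_not_saturates_max_card_inter (M : Finset (Sym2 V)) {x : V}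
    (hx : x ∈ OSet G) :
    ∃ N, IsMaxMatching G N ∧ ¬ Saturates N x ∧
      ∀ N', IsMaxMatching G N' → ¬ Saturates N' x → #(M ∩ N') ≤ #(M ∩ N) := by
  obtain ⟨N, hN⟩ :=
    exists_max_image (univ.filter fun N => IsMaxMatching G N ∧ ¬ Saturates N x)
      (fun N => #(M ∩ N)) (by simpa [Finset.Nonempty] using mem_OSet_iff.mp hx)
  simp only [mem_filter, mem_univ, true_and, and_imp] at hN
  exact ⟨N, hN.1.1, hN.1.2, hN.2⟩

lemma IsMaxMatching.saturates_of_reachable {M : Finset (Sym2 V)} {a b : V} (hM : IsMaxMatching G M)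
    (hab : (OGraph G).Reachable a b) (hne : a ≠ b) (ha : ¬ Saturates M a) : Saturates M b := by
  obtain ⟨p⟩ := hab
  induction p generalizing M with
  | nil => exact absurd rfl hne
  | @cons a x b hax q ih =>
    obtain ⟨-, hx, hax⟩ := OGraph_adj.mp hax
    by_contra hb
    by_cases hxb : x = b
    · subst hxb
      exact hb (hM.saturates_of_adj hax ha)
    obtain ⟨N, hN, hNx, hNmax⟩ := exists_isMaxMatching_not_saturates_max_card_inter M hx
    obtain ⟨y, hyN, ⟨M', hM', hM'y, hM'pres⟩, N', hN', hN'pres, hN'card⟩ :=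
      hM.exists_exchange hN hb (ih hN hxb hNx)
    by_cases hyx : y = x
    · subst hyx
      exact hM'y (hM'.saturates_of_adj hax (hM'pres a ha hne))
    · exact (hNmax N' hN' (hN'pres x hNx (Ne.symm hyx))).not_gt hN'card

end Gallai

section Embedding

variable {V W : Type} {G : SimpleGraph V} {H : SimpleGraph W} (f : H ↪g G)

lemma IsMatchingSet.image_sym2Map {M : Finset (Sym2 W)} (hM : IsMatchingSet H M) :
    IsMatchingSet G (M.image (Sym2.map f)) := by
  refine ⟨fun _ he => ?_, fun _ he _ he' hne _ hu hu' => ?_⟩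
  · obtain ⟨e, heM, rfl⟩ := mem_image.mp he
    exact (f.map_mem_edgeSet_iff).mpr (hM.1 e heM)
  · obtain ⟨e, heM, rfl⟩ := mem_image.mp he
    obtain ⟨e', he'M, rfl⟩ := mem_image.mp he'
    obtain ⟨z, hz, rfl⟩ := Sym2.mem_map.mp hu
    obtain ⟨z', hz', hzz'⟩ := Sym2.mem_map.mp hu'
    rw [f.injective hzz'] at hz'
    exact hM.2 e heM e' he'M (fun h => hne (h ▸ rfl)) z hz hz'

lemma IsMatchingSet.preimage_sym2Map {M : Finset (Sym2 V)} (hM : IsMatchingSet G M) :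
    IsMatchingSet H (M.preimage (Sym2.map f) (Sym2.map.injective f.injective).injOn) := by
  refine ⟨fun e he => ?_, fun e he e' he' hne u hu hu' => ?_⟩
  · exact (f.map_mem_edgeSet_iff).mp (hM.1 _ (mem_preimage.mp he))
  · exact hM.2 _ (mem_preimage.mp he) _ (mem_preimage.mp he')
      (fun h => hne (Sym2.map.injective f.injective h)) (f u)
      (Sym2.mem_map.mpr ⟨u, hu, rfl⟩) (Sym2.mem_map.mpr ⟨u, hu', rfl⟩)

lemma saturates_image_sym2Map_iff {M : Finset (Sym2 W)} {u : V} :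
    Saturates (M.image (Sym2.map f)) u ↔ ∃ z, f z = u ∧ Saturates M z := by
  constructor
  · rintro ⟨_, he, hu⟩
    obtain ⟨e, heM, rfl⟩ := mem_image.mp he
    obtain ⟨z, hz, rfl⟩ := Sym2.mem_map.mp hu
    exact ⟨z, rfl, e, heM, hz⟩
  · rintro ⟨z, rfl, e, he, hz⟩
    exact ⟨_, mem_image_of_mem _ he, Sym2.mem_map.mpr ⟨z, hz, rfl⟩⟩

lemma MMnum_le_of_embedding [Fintype V] (f : H ↪g G) : MMnum H ≤ MMnum G := by
  refine csSup_le ⟨0, ∅, ⟨by simp, by simp⟩, rfl⟩ ?_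
  rintro n ⟨M, hM, rfl⟩
  rw [← card_image_of_injective M (Sym2.map.injective f.injective)]
  exact (hM.image_sym2Map f).card_le_MMnum

lemma MMnum_le_of_saturates_mem_range [Fintype W] {M : Finset (Sym2 V)}
    (hM : IsMaxMatching G M) (hrange : ∀ u, Saturates M u → u ∈ Set.range f) :
    MMnum G ≤ MMnum H := by
  have hM_image : (M.preimage (Sym2.map f) (Sym2.map.injective f.injective).injOn).image
      (Sym2.map f) = M := by
    refine (image_preimage _ _ _).trans (filter_true_of_mem fun e he => ?_)
    induction e using Sym2.ind with
    | _ u w =>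
      obtain ⟨u, rfl⟩ := hrange u ⟨_, he, Sym2.mem_mk_left u w⟩
      obtain ⟨w, rfl⟩ := hrange w ⟨_, he, Sym2.mem_mk_right _ w⟩
      exact ⟨s(u, w), rfl⟩
  rw [← hM.2, ← hM_image, card_image_of_injective _ (Sym2.map.injective f.injective)]
  exact (hM.1.preimage_sym2Map f).card_le_MMnum

end Embedding

section DeleteVertex

variable {V : Type} [Fintype V] {G : SimpleGraph V} {o : V}

lemma exists_isMaxMatching_of_mem_OSet_induce_compl (ho : o ∈ OSet G)
    {z : ({o}ᶜ : Set V)} (hz : z ∈ OSet (G.induce {o}ᶜ)) :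
    ∃ M, IsMaxMatching G M ∧ ¬ Saturates M o ∧ ¬ Saturates M z := by
  let f := SimpleGraph.Embedding.induce (G := G) ({o}ᶜ : Set V)
  obtain ⟨M₀, hM₀, hM₀o⟩ := mem_OSet_iff.mp ho
  have hMMnum : MMnum (G.induce {o}ᶜ) = MMnum G :=
    le_antisymm (MMnum_le_of_embedding f) (MMnum_le_of_saturates_mem_range f hM₀
      fun u hu => ⟨⟨u, fun h => hM₀o (h ▸ hu)⟩, rfl⟩)
  obtain ⟨M, hM, hMz⟩ := mem_OSet_iff.mp hz
  refine ⟨M.image (Sym2.map f), ⟨hM.1.image_sym2Map f, ?_⟩, fun h => ?_, fun h => ?_⟩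
  · rw [card_image_of_injective _ (Sym2.map.injective f.injective), hM.2, hMMnum]
  · obtain ⟨y, hy, -⟩ := (saturates_image_sym2Map_iff f).mp h
    exact y.2 hy
  · obtain ⟨y, hy, hsat⟩ := (saturates_image_sym2Map_iff f).mp h
    exact hMz (Subtype.ext hy ▸ hsat)

lemma notMem_OSet_induce_compl_of_reachable (ho : o ∈ OSet G) {z : ({o}ᶜ : Set V)}
    (hz : (OGraph G).Reachable o z) : z ∉ OSet (G.induce {o}ᶜ) := fun hzO =>
  let ⟨_, hM, hMo, hMz⟩ := exists_isMaxMatching_of_mem_OSet_induce_compl ho hzO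
  hMz (hM.saturates_of_reachable hz (Ne.symm z.2) hMo)

lemma mem_GEPSet_induce_compl_of_reachable (ho : o ∈ OSet G) {u : ({o}ᶜ : Set V)}
    (hu : (u : V) ∈ OSet G) (hreach : (OGraph G).Reachable o u) :
    u ∈ GEPSet (G.induce {o}ᶜ) := by
  rintro (huO | ⟨-, z, hzO, hzu⟩)
  · exact notMem_OSet_induce_compl_of_reachable ho hreach huO
  · obtain ⟨M, hM, -, hMz⟩ := exists_isMaxMatching_of_mem_OSet_induce_compl ho hzO
    have hz : (z : V) ∈ OSet G := mem_OSet_iff.mpr ⟨M, hM, hMz⟩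
    have hzu' : (OGraph G).Adj u z := ⟨hu, hz, hzu.symm⟩
    exact notMem_OSet_induce_compl_of_reachable ho (hreach.trans hzu'.reachable) hzO

end DeleteVertex

theorem edge_in_P_after_deleting_O_vertex_general {V : Type} [Fintype V] (G : SimpleGraph V)
    (o v : V) (ho : o ∈ OSet G) (hv : v ∈ OSet G) (hadj : G.Adj o v) :
    ∃ a b : ({o}ᶜ : Set V),
      a ∈ GEPSet (G.induce ({o}ᶜ : Set V)) ∧ b ∈ GEPSet (G.induce ({o}ᶜ : Set V)) ∧
        (G.induce ({o}ᶜ : Set V)).Adj a b := by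
  obtain ⟨M, hM, hMo⟩ := mem_OSet_iff.mp ho
  obtain ⟨w, hvw⟩ := (hM.saturates_of_adj hadj hMo).exists_mk_mem
  have hwo : w ≠ o := fun h => hMo ⟨_, hvw, h ▸ Sym2.mem_mk_right v w⟩
  have hw : w ∈ OSet G :=
    let ⟨hM', hM'w, _⟩ := hM.swap hadj hMo hvw
    mem_OSet_iff.mpr ⟨_, hM', hM'w⟩
  have hov : (OGraph G).Adj o v := ⟨ho, hv, hadj⟩
  have hvw' : (OGraph G).Adj v w := ⟨hv, hw, hM.1.adj hvw⟩
  exact ⟨⟨v, hadj.ne'⟩, ⟨w, hwo⟩,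
    mem_GEPSet_induce_compl_of_reachable ho hv hov.reachable,
    mem_GEPSet_induce_compl_of_reachable ho hw (hov.reachable.trans hvw'.reachable),
    hM.1.adj hvw⟩

/-- If `surplus(G) ≥ 2`, `I(G) ∪ P(G)` is independent, and `o, v ∈ O(G)` are
adjacent, then `G' = G − {o}` has an edge inside `P(G')`. -/
theorem edge_in_P_after_deleting_O_vertex {V : Type} [Fintype V] (G : SimpleGraph V)
    (hsur : SurplusGE G 2) (hI : IndepSet G (ISet G ∪ GEPSet G))
    (o v : V) (ho : o ∈ OSet G) (hv : v ∈ OSet G) (hadj : G.Adj o v) :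
    ∃ a b : ({o}ᶜ : Set V),
      a ∈ GEPSet (G.induce ({o}ᶜ : Set V)) ∧ b ∈ GEPSet (G.induce ({o}ᶜ : Set V)) ∧
        (G.induce ({o}ᶜ : Set V)).Adj a b :=
  edge_in_P_after_deleting_O_vertex_general G o v ho hv hadj
end

section
/- Let G be a finite simple graph and let x be a half-integral optimal solution to LPVC(G). Then MM(G) ≥ MM(G[V^x_{1/2}]) + |V^x_1|, where G[V^x_{1/2}] is the induced subgraph of G on V^x_{1/2}. -/
open scoped Classical

lemma mm_bddAbove {V : Type} [Fintype V] (G : SimpleGraph V) :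
    BddAbove {n : ℕ | ∃ M : Finset (Sym2 V), IsMatchingSet G M ∧ M.card = n} := by
  refine ⟨Fintype.card (Sym2 V), ?_⟩
  rintro n ⟨M, _, rfl⟩
  exact Finset.card_le_univ M

lemma le_MMnum {V : Type} [Fintype V] (G : SimpleGraph V) {M : Finset (Sym2 V)}
    (h : IsMatchingSet G M) : M.card ≤ MMnum G :=
  le_csSup (mm_bddAbove G) ⟨M, h, rfl⟩

lemma exists_max_matching {V : Type} [Fintype V] (G : SimpleGraph V) :
    ∃ M : Finset (Sym2 V), IsMatchingSet G M ∧ M.card = MMnum G := by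
  have hne : Set.Nonempty {n : ℕ | ∃ M : Finset (Sym2 V), IsMatchingSet G M ∧ M.card = n} :=
    ⟨0, ∅, ⟨by simp, by simp⟩, rfl⟩
  exact Nat.sSup_mem hne (mm_bddAbove G)

/-- For a half-integral optimal LP solution `x`,
`MM(G) ≥ MM(G[V^x_{1/2}]) + |V^x_1|`. -/
theorem mm_ge_mm_half_add_ones {V : Type} [Fintype V] (G : SimpleGraph V)
    (x : V → ℝ) (hx : IsFVC G x)
    (hhalf : ∀ v, x v = 0 ∨ x v = 1 / 2 ∨ x v = 1)
    (hopt : fvcWeight x = LPopt G) :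
    MMnum (G.induce {v | x v = 1 / 2}) + ({v | x v = 1} : Set V).ncard ≤ MMnum G := by
  obtain ⟨hx0, hxe⟩ := hx
  -- Hall setup : match vertices of value 1 into neighbours of value 0
  set r : {v // x v = 1} → Finset V :=
    fun i => Finset.univ.filter (fun v => x v = 0 ∧ G.Adj i.1 v) with hr
  have hall : ∀ S : Finset {v // x v = 1}, S.card ≤ (S.biUnion r).card := by
    intro S
    by_contra hlt
    push_neg at hlt
    set T : Finset V := S.biUnion r with hT
    set Sv : Finset V := S.image Subtype.val with hSv
    have hSvcard : Sv.card = S.card := Finset.card_image_of_injective S Subtype.val_injective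
    have hSv1 : ∀ v ∈ Sv, x v = 1 := by
      intro v hv; obtain ⟨i, _, rfl⟩ := Finset.mem_image.mp hv; exact i.2
    have hT0 : ∀ v ∈ T, x v = 0 := by
      intro v hv
      obtain ⟨i, _, hvr⟩ := Finset.mem_biUnion.mp hv
      exact (Finset.mem_filter.mp hvr).2.1
    have hclose : ∀ u v, G.Adj u v → u ∈ Sv → x v = 0 → v ∈ T := by
      intro u v huv hu hv
      obtain ⟨i, hiS, rfl⟩ := Finset.mem_image.mp hu
      exact Finset.mem_biUnion.mpr ⟨i, hiS, Finset.mem_filter.mpr ⟨Finset.mem_univ v, hv, huv⟩⟩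
    set y : V → ℝ := fun v => if v ∈ Sv ∨ v ∈ T then 1/2 else x v with hy
    have hyval : ∀ v, (v ∈ Sv ∨ v ∈ T → y v = 1/2) ∧ (¬(v ∈ Sv ∨ v ∈ T) → y v = x v) := by
      intro v
      constructor
      · intro h; simp only [hy, if_pos h]
      · intro h; simp only [hy, if_neg h]
    have hyfvc : IsFVC G y := by
      constructor
      · intro v
        by_cases h : v ∈ Sv ∨ v ∈ T
        · rw [(hyval v).1 h]; norm_num
        · rw [(hyval v).2 h]; exact hx0 v
      · intro u v huv
        have key : ∀ a b, G.Adj a b → (a ∈ Sv ∨ a ∈ T) → ¬(b ∈ Sv ∨ b ∈ T) → 1/2 ≤ x b := by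
          intro a b hab ha hb
          rcases hhalf b with h0 | h | h1
          · rcases ha with ha | ha
            · exact absurd (Or.inr (hclose a b hab ha h0)) hb
            · have := hxe hab
              have := hT0 a ha
              linarith
          · linarith
          · linarith
        by_cases hu : u ∈ Sv ∨ u ∈ T <;> by_cases hv : v ∈ Sv ∨ v ∈ T
        · rw [(hyval u).1 hu, (hyval v).1 hv]; norm_num
        · rw [(hyval u).1 hu, (hyval v).2 hv]
          have := key u v huv hu hv; linarith
        · rw [(hyval u).2 hu, (hyval v).1 hv]
          have := key v u huv.symm hv hu; linarith
        · rw [(hyval u).2 hu, (hyval v).2 hv]; exact hxe huv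
    have hdisj : Disjoint Sv T := by
      rw [Finset.disjoint_left]
      intro a ha hat
      have h1 := hSv1 a ha
      have h2 := hT0 a hat
      linarith
    have hsum : fvcWeight y = fvcWeight x - Sv.card * (1/2) + T.card * (1/2) := by
      have hdiff : ∑ v, (y v - x v) = ∑ v ∈ Sv ∪ T, (y v - x v) := by
        refine (Finset.sum_subset (Finset.subset_univ _) ?_).symm
        intro v _ hvn
        rw [Finset.mem_union] at hvn
        rw [(hyval v).2 hvn]
        ring
      have hsplit : ∑ v ∈ Sv ∪ T, (y v - x v)
          = ∑ v ∈ Sv, (y v - x v) + ∑ v ∈ T, (y v - x v) := Finset.sum_union hdisj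
      have hS : ∑ v ∈ Sv, (y v - x v) = Sv.card * (-(1/2)) := by
        rw [Finset.sum_congr rfl (fun v hv => ?_), Finset.sum_const, nsmul_eq_mul]
        rw [(hyval v).1 (Or.inl hv), hSv1 v hv]; norm_num
      have hTs : ∑ v ∈ T, (y v - x v) = T.card * (1/2) := by
        rw [Finset.sum_congr rfl (fun v hv => ?_), Finset.sum_const, nsmul_eq_mul]
        rw [(hyval v).1 (Or.inr hv), hT0 v hv]; norm_num
      have : fvcWeight y - fvcWeight x = ∑ v, (y v - x v) := by
        simp [fvcWeight, Finset.sum_sub_distrib]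
      rw [hdiff, hsplit, hS, hTs] at this
      linarith
    have hlb : BddBelow {w : ℝ | ∃ z : V → ℝ, IsFVC G z ∧ w = fvcWeight z} := by
      refine ⟨0, ?_⟩
      rintro w ⟨z, hz, rfl⟩
      exact Finset.sum_nonneg fun v _ => (hz.1 v).1
    have hle : LPopt G ≤ fvcWeight y := csInf_le hlb ⟨y, hyfvc, rfl⟩
    rw [← hopt] at hle
    have hcast : (T.card : ℝ) < (Sv.card : ℝ) := by
      rw [hSvcard]; exact_mod_cast hlt
    have : fvcWeight y < fvcWeight x := by rw [hsum]; linarith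
    linarith
  obtain ⟨f, hfinj, hfr⟩ := (Finset.all_card_le_biUnion_card_iff_existsInjective' r).mp hall
  have hf0 : ∀ i, x (f i) = 0 := fun i => (Finset.mem_filter.mp (hfr i)).2.1
  have hfadj : ∀ i, G.Adj i.1 (f i) := fun i => (Finset.mem_filter.mp (hfr i)).2.2
  -- maximum matching on the half vertices
  obtain ⟨M', hM', hMc⟩ := exists_max_matching (G.induce {v | x v = 1 / 2})
  set M1 : Finset (Sym2 V) :=
    M'.image (Sym2.map (Subtype.val : {v | x v = 1 / 2} → V)) with hM1
  set M2 : Finset (Sym2 V) :=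
    Finset.univ.image (fun i : {v // x v = 1} => s(i.1, f i)) with hM2
  have key1 : ∀ e ∈ M1, ∀ v, v ∈ e → x v = 1/2 := by
    intro e he v hv
    obtain ⟨e', _, rfl⟩ := Finset.mem_image.mp he
    obtain ⟨b, _, rfl⟩ := Sym2.mem_map.mp hv
    exact b.2
  have key2 : ∀ e ∈ M2, ∃ i : {v // x v = 1}, e = s(i.1, f i) := by
    intro e he
    obtain ⟨i, _, rfl⟩ := Finset.mem_image.mp he
    exact ⟨i, rfl⟩
  have hM1edge : ∀ e ∈ M1, e ∈ G.edgeSet := by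
    intro e he
    obtain ⟨e', he', rfl⟩ := Finset.mem_image.mp he
    have hE := hM'.1 e' he'
    revert hE
    refine Sym2.ind (fun a b hE => ?_) e'
    simp only [SimpleGraph.mem_edgeSet] at hE ⊢
    rw [Sym2.map_pair_eq]
    simp only [SimpleGraph.mem_edgeSet]
    exact hE
  have hM2edge : ∀ e ∈ M2, e ∈ G.edgeSet := by
    intro e he
    obtain ⟨i, rfl⟩ := key2 e he
    exact hfadj i
  -- M2 vertices never have value 1/2
  have key2' : ∀ e ∈ M2, ∀ v, v ∈ e → x v ≠ 1/2 := by
    intro e he v hv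
    obtain ⟨i, rfl⟩ := key2 e he
    rcases Sym2.mem_iff.mp hv with rfl | rfl
    · rw [i.2]; norm_num
    · rw [hf0 i]; norm_num
  have hdisjM : Disjoint M1 M2 := by
    rw [Finset.disjoint_left]
    intro e he1 he2
    obtain ⟨i, rfl⟩ := key2 e he2
    have h1 := key1 _ he1 i.1 (Sym2.mem_mk_left _ _)
    have h2 := i.2
    rw [h2] at h1
    norm_num at h1
  have hmatch : IsMatchingSet G (M1 ∪ M2) := by
    constructor
    · intro e he
      rcases Finset.mem_union.mp he with h | h
      · exact hM1edge e h
      · exact hM2edge e h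
    · intro e he g hg hne v hve hvg
      rcases Finset.mem_union.mp he with he1 | he2 <;>
        rcases Finset.mem_union.mp hg with hg1 | hg2
      · -- both in M1
        obtain ⟨e', he', rfl⟩ := Finset.mem_image.mp he1
        obtain ⟨g', hg', rfl⟩ := Finset.mem_image.mp hg1
        have hne' : e' ≠ g' := fun h => hne (by rw [h])
        obtain ⟨a, ha, rfl⟩ := Sym2.mem_map.mp hve
        obtain ⟨b, hb, hba⟩ := Sym2.mem_map.mp hvg
        have : b = a := Subtype.val_injective hba
        subst this
        exact hM'.2 e' he' g' hg' hne' b ha hb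
      · have h1 := key1 _ he1 v hve
        exact key2' _ hg2 v hvg h1
      · have h1 := key1 _ hg1 v hvg
        exact key2' _ he2 v hve h1
      · obtain ⟨i, rfl⟩ := key2 _ he2
        obtain ⟨j, rfl⟩ := key2 _ hg2
        have hij : i ≠ j := fun h => hne (by rw [h])
        rcases Sym2.mem_iff.mp hve with rfl | rfl <;>
          rcases Sym2.mem_iff.mp hvg with hv2 | hv2
        · exact hij (Subtype.ext hv2)
        · have := i.2; rw [hv2, hf0 j] at this; norm_num at this
        · have := j.2; rw [← hv2, hf0 i] at this; norm_num at this
        · exact hij (hfinj hv2)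
  have hM1card : M1.card = M'.card :=
    Finset.card_image_of_injective M' (Sym2.map.injective Subtype.val_injective)
  have hM2card : M2.card = Fintype.card {v // x v = 1} := by
    rw [Finset.card_image_of_injective _ ?_, Finset.card_univ]
    intro i j hij
    rcases Sym2.eq_iff.mp hij with ⟨h1, _⟩ | ⟨h1, h2⟩
    · exact Subtype.ext h1
    · have := i.2; rw [h1, hf0 j] at this; norm_num at this
  have hcard : (M1 ∪ M2).card = M'.card + Fintype.card {v // x v = 1} := by
    rw [Finset.card_union_of_disjoint hdisjM, hM1card, hM2card]
  have hnc : ({v | x v = 1} : Set V).ncard = Fintype.card {v // x v = 1} := by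
    rw [← Nat.card_coe_set_eq, Nat.card_eq_fintype_card]
    exact Fintype.card_congr (Equiv.refl _)
  have hfin := le_MMnum G hmatch
  rw [hcard, hMc] at hfin
  rw [hnc]
  exact hfin
end

section
/- Let G be a finite simple graph with surplus(G) ≥ 1, and let Z be a nonempty independent set of G with |N(Z)| = |Z| + 1 such that N(Z) is also an independent set of G. Let G' be the struction graph obtained from G and Z. Then LP(G') ≥ LP(G) − |Z|. -/
open scoped Classical

/-- The struction graph obtained from `G` and `Z`: delete `Z`, identify `N(Z)`
into a single new vertex `z` adjacent to exactly those remaining vertices that are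
adjacent in `G` to some vertex of `N(Z)`. -/
def struction {V : Type} (G : SimpleGraph V) (Z : Set V) :
    SimpleGraph (((Z ∪ nbhd G Z)ᶜ : Set V) ⊕ Unit) where
  Adj a b :=
    match a, b with
    | Sum.inl u, Sum.inl v => G.Adj u.1 v.1
    | Sum.inl u, Sum.inr _ => ∃ w ∈ nbhd G Z, G.Adj w u.1
    | Sum.inr _, Sum.inl v => ∃ w ∈ nbhd G Z, G.Adj w v.1
    | Sum.inr _, Sum.inr _ => False
  symm := by
    refine ⟨?_⟩
    rintro (u | u) (v | v) h
    · exact h.symm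
    · exact h
    · exact h
    · exact h
  loopless := by
    refine ⟨?_⟩
    rintro (u | u) h
    · exact G.loopless.irrefl u.1 h
    · exact h

/-!
A fractional vertex cover `x` of the struction, with value `t` on the new vertex, pulls back to
`G` by giving every vertex of `N(Z)` the value `t` and every vertex of `Z` the value `1 - t`.
As `Z` and `N(Z)` are independent, every edge meeting `Z` joins `Z` to `N(Z)` and is covered
exactly; an edge from `N(Z)` to a remaining vertex `v` is covered because `v` is adjacent to the
new vertex. The weight changes by `|Z|(1 - t) + |N(Z)| t - t = |Z|`, as `|N(Z)| = |Z| + 1`.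
-/

open Finset

section LP

variable {V : Type} [Fintype V] {G : SimpleGraph V}

theorem IsFVC.LPopt_le {x : V → ℝ} (hx : IsFVC G x) : LPopt G ≤ fvcWeight x :=
  csInf_le ⟨0, by rintro w ⟨y, hy, rfl⟩; exact sum_nonneg fun v _ => (hy.1 v).1⟩ ⟨x, hx, rfl⟩

theorem le_LPopt {c : ℝ} (h : ∀ x, IsFVC G x → c ≤ fvcWeight x) : c ≤ LPopt G := by
  refine le_csInf ⟨fvcWeight fun _ => 1, fun _ => 1, ⟨fun _ => ⟨zero_le_one, le_rfl⟩,
    fun _ _ _ => by norm_num⟩, rfl⟩ ?_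
  rintro w ⟨x, hx, rfl⟩
  exact h x hx

end LP

theorem sum_toFinset_eq_ncard_mul {V R : Type*} [Fintype V] [Semiring R] {A : Set V} {f : V → R}
    {c : R} (h : ∀ v ∈ A, f v = c) : ∑ v ∈ A.toFinset, f v = A.ncard * c := by
  rw [sum_congr rfl fun v hv => h v (Set.mem_toFinset.mp hv), sum_const, nsmul_eq_mul,
    Set.ncard_eq_toFinset_card']

namespace struction

variable {V : Type} (G : SimpleGraph V) (Z : Set V)

noncomputable def pullback (x : ((Z ∪ nbhd G Z)ᶜ : Set V) ⊕ Unit → ℝ) (v : V) : ℝ :=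
  if h : v ∈ (Z ∪ nbhd G Z)ᶜ then x (.inl ⟨v, h⟩)
  else if v ∈ Z then 1 - x (.inr ()) else x (.inr ())

variable {G Z} (x : ((Z ∪ nbhd G Z)ᶜ : Set V) ⊕ Unit → ℝ)

theorem pullback_of_mem_compl {v : V} (h : v ∈ (Z ∪ nbhd G Z)ᶜ) :
    pullback G Z x v = x (.inl ⟨v, h⟩) :=
  dif_pos h

theorem pullback_of_mem {v : V} (h : v ∈ Z) : pullback G Z x v = 1 - x (.inr ()) := by
  rw [pullback, dif_neg (by simp [h]), if_pos h]

theorem pullback_of_mem_nbhd {v : V} (h : v ∈ nbhd G Z) : pullback G Z x v = x (.inr ()) := by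
  rw [pullback, dif_neg (by simp [h]), if_neg h.1]

variable {x}

theorem pullback_add_pullback_of_mem (hZ : IndepSet G Z) (hN : IndepSet G (nbhd G Z))
    (hx : IsFVC (struction G Z) x) {u v : V} (hu : u ∈ Z ∪ nbhd G Z) (huv : G.Adj u v) :
    1 ≤ pullback G Z x u + pullback G Z x v := by
  rcases hu with hu | hu
  · have hv : v ∈ nbhd G Z := ⟨fun hv => hZ u hu v hv huv, u, hu, huv⟩
    rw [pullback_of_mem x hu, pullback_of_mem_nbhd x hv]
    linarith
  · by_cases hvZ : v ∈ Z
    · rw [pullback_of_mem_nbhd x hu, pullback_of_mem x hvZ]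
      linarith
    have hv : v ∈ (Z ∪ nbhd G Z)ᶜ := fun h => h.elim hvZ fun hvN => hN u hu v hvN huv
    rw [pullback_of_mem_nbhd x hu, pullback_of_mem_compl x hv]
    exact hx.2 (show (struction G Z).Adj (.inr ()) (.inl ⟨v, hv⟩) from ⟨u, hu, huv⟩)

theorem isFVC_pullback (hZ : IndepSet G Z) (hN : IndepSet G (nbhd G Z))
    (hx : IsFVC (struction G Z) x) : IsFVC G (pullback G Z x) := by
  refine ⟨fun v => ?_, fun u v huv => ?_⟩
  · by_cases hv : v ∈ (Z ∪ nbhd G Z)ᶜ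
    · rw [pullback_of_mem_compl x hv]
      exact hx.1 _
    have ht := hx.1 (.inr ())
    rcases not_not.mp hv with hv | hv
    · rw [pullback_of_mem x hv]
      constructor <;> linarith
    · rw [pullback_of_mem_nbhd x hv]
      exact ht
  by_cases hu : u ∈ Z ∪ nbhd G Z
  · exact pullback_add_pullback_of_mem hZ hN hx hu huv
  by_cases hv : v ∈ Z ∪ nbhd G Z
  · rw [add_comm]
    exact pullback_add_pullback_of_mem hZ hN hx hv huv.symm
  rw [pullback_of_mem_compl x hu, pullback_of_mem_compl x hv]
  exact hx.2 (show (struction G Z).Adj (.inl ⟨u, hu⟩) (.inl ⟨v, hv⟩) from huv)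

variable [Fintype V]

theorem fvcWeight_pullback (hZN : (nbhd G Z).ncard = Z.ncard + 1) :
    fvcWeight (pullback G Z x) = fvcWeight x + Z.ncard := by
  have hdisj : Disjoint Z.toFinset (nbhd G Z).toFinset :=
    Set.disjoint_toFinset.mpr (Set.disjoint_right.mpr fun _ h => h.1)
  have h_in : ∑ v ∈ (Z ∪ nbhd G Z).toFinset, pullback G Z x v
      = Z.ncard * (1 - x (.inr ())) + (nbhd G Z).ncard * x (.inr ()) := by
    rw [Set.toFinset_union, sum_union hdisj,
      sum_toFinset_eq_ncard_mul fun v hv => pullback_of_mem x hv,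
      sum_toFinset_eq_ncard_mul fun v hv => pullback_of_mem_nbhd x hv]
  have h_out : ∑ v ∈ (Z ∪ nbhd G Z).toFinsetᶜ, pullback G Z x v
      = ∑ u : ↥(Z ∪ nbhd G Z)ᶜ, x (.inl u) := by
    rw [← Set.toFinset_compl, ← sum_set_coe]
    exact sum_congr rfl fun u _ => pullback_of_mem_compl x u.2
  rw [fvcWeight, fvcWeight, ← sum_add_sum_compl (Z ∪ nbhd G Z).toFinset, h_in, h_out,
    Fintype.sum_sum_type, Fintype.sum_unique fun u : Unit => x (.inr u), hZN]
  push_cast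
  ring

end struction

theorem lp_struction_ge_general {V : Type} [Fintype V] (G : SimpleGraph V)
    (Z : Set V) (hZind : IndepSet G Z)
    (hZsur : (nbhd G Z).ncard = Z.ncard + 1) (hNind : IndepSet G (nbhd G Z)) :
    LPopt G - (Z.ncard : ℝ) ≤ LPopt (struction G Z) := by
  refine le_LPopt fun x hx => ?_
  have hle := (struction.isFVC_pullback hZind hNind hx).LPopt_le
  rw [struction.fvcWeight_pullback hZsur] at hle
  linarith

/-- Struction does not drop `LP` by more than `|Z|`. -/
theorem lp_struction_ge {V : Type} [Fintype V] (G : SimpleGraph V)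
    (hsur : SurplusGE G 1) (Z : Set V) (hZne : Z.Nonempty) (hZind : IndepSet G Z)
    (hZsur : (nbhd G Z).ncard = Z.ncard + 1) (hNind : IndepSet G (nbhd G Z)) :
    LPopt G - (Z.ncard : ℝ) ≤ LPopt (struction G Z) :=
  lp_struction_ge_general G Z hZind hZsur hNind
end

section
/- Let G be a finite simple graph with at least one vertex. Then surplus(G) ≥ 2 if and only if both of the following hold: (a) the constant function x ≡ 1/2 is the unique fractional vertex cover of G of minimum weight; and (b) there is no nonempty independent set Z of G with |N(Z)| = |Z| + 1. -/
open scoped Classical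

lemma half_lt_of_adj {V : Type} {G : SimpleGraph V} {x : V → ℝ} (hx : IsFVC G x)
    {u v : V} (hu : x u < 1/2) (h : G.Adj u v) : 1/2 < x v := by
  have := hx.2 h; linarith

lemma main_bound {V : Type} [Fintype V] (G : SimpleGraph V) (h1 : SurplusGE G 1)
    (x : V → ℝ) (hx : IsFVC G x) :
    (Fintype.card V : ℝ)/2 ≤ fvcWeight x ∧
      (fvcWeight x = (Fintype.card V : ℝ)/2 → x = fun _ => (1:ℝ)/2) := by
  set S : Finset V := Finset.univ.filter (fun v => x v < 1/2) with hS
  have hmemS : ∀ v, v ∈ S ↔ x v < 1/2 := by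
    intro v; simp [hS]
  have hSindep : ∀ u ∈ S, ∀ v ∈ S, ¬ G.Adj u v := by
    intro u hu v hv hadj
    have := hx.2 hadj
    rw [hmemS] at hu hv; linarith
  -- Hall's condition
  set t : {v // v ∈ S} → Finset V := fun s => Finset.univ.filter (fun w => G.Adj ↑s w) with ht
  have hall : ∀ T : Finset {v // v ∈ S}, T.card ≤ (T.biUnion t).card := by
    intro T
    rcases T.eq_empty_or_nonempty with rfl | hTne
    · simp
    · set X : Set V := ↑(T.image Subtype.val) with hX
      have hXne : X.Nonempty := by
        obtain ⟨s, hs⟩ := hTne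
        refine ⟨↑s, ?_⟩
        simp only [hX, Finset.coe_image, Set.mem_image, Finset.mem_coe]
        exact ⟨s, hs, rfl⟩
      have hXS : ∀ v ∈ X, v ∈ S := by
        intro v hv
        simp only [hX, Finset.coe_image, Set.mem_image, Finset.mem_coe] at hv
        obtain ⟨s, _, rfl⟩ := hv; exact s.2
      have hXind : IndepSet G X := fun u hu v hv => hSindep u (hXS u hu) v (hXS v hv)
      have hsur := h1 X hXne hXind
      have hcardX : X.ncard = T.card := by
        rw [hX, Set.ncard_coe_finset, Finset.card_image_of_injective _ Subtype.val_injective]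
      have hsub : nbhd G X ⊆ ↑(T.biUnion t) := by
        intro w hw
        obtain ⟨hwX, u, huX, hadj⟩ := hw
        simp only [hX, Finset.coe_image, Set.mem_image, Finset.mem_coe] at huX
        obtain ⟨s, hsT, rfl⟩ := huX
        simp only [Finset.coe_biUnion, Set.mem_iUnion, Finset.mem_coe]
        exact ⟨s, hsT, by simp [ht, hadj]⟩
      have := Set.ncard_le_ncard hsub (Finset.finite_toSet _)
      rw [Set.ncard_coe_finset] at this
      omega
  obtain ⟨f, hfinj, hft⟩ := (Finset.all_card_le_biUnion_card_iff_exists_injective t).1 hall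
  have hfadj : ∀ s : {v // v ∈ S}, G.Adj ↑s (f s) := by
    intro s; have := hft s; simp [ht] at this; exact this
  set F : Finset V := S.attach.image f with hF
  have hFhalf : ∀ w ∈ F, 1/2 < x w := by
    intro w hw
    simp only [hF, Finset.mem_image] at hw
    obtain ⟨s, _, rfl⟩ := hw
    exact half_lt_of_adj hx ((hmemS _).1 s.2) (hfadj s)
  have hdisj : Disjoint S F := by
    rw [Finset.disjoint_left]
    intro v hv hvF
    have := hFhalf v hvF
    rw [hmemS] at hv; linarith
  have hFcard : F.card = S.card := by
    rw [hF, Finset.card_image_of_injective _ hfinj, Finset.card_attach]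
  -- sums
  have key1 : (S.card : ℝ) ≤ ∑ v ∈ S, x v + ∑ v ∈ F, x v := by
    have e1 : ∑ v ∈ F, x v = ∑ s ∈ S.attach, x (f s) :=
      (Finset.sum_image (fun a _ b _ h => hfinj h))
    have e2 : ∑ v ∈ S, x v = ∑ s ∈ S.attach, x ↑s := (Finset.sum_attach S x).symm
    rw [e1, e2, ← Finset.sum_add_distrib]
    calc (S.card : ℝ) = ∑ _s ∈ S.attach, (1:ℝ) := by
          rw [Finset.sum_const, Finset.card_attach]; simp
      _ ≤ _ := Finset.sum_le_sum (fun s _ => hx.2 (hfadj s))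
  have hnotS : ∀ v, v ∉ S → 1/2 ≤ x v := by
    intro v hv; rw [hmemS] at hv; linarith
  have key2 : ∀ (C : Finset V), (∀ v ∈ C, v ∉ S) → ((C.card : ℝ)/2 ≤ ∑ v ∈ C, x v) := by
    intro C hC
    calc (C.card : ℝ)/2 = ∑ _v ∈ C, (1/2 : ℝ) := by rw [Finset.sum_const]; push_cast; ring
      _ ≤ _ := Finset.sum_le_sum (fun v hv => hnotS v (hC v hv))
  have hsplit : fvcWeight x = (∑ v ∈ S, x v + ∑ v ∈ F, x v) + ∑ v ∈ (S ∪ F)ᶜ, x v := by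
    rw [fvcWeight, ← Finset.sum_add_sum_compl (S ∪ F) x, Finset.sum_union hdisj]
  have hcards : Fintype.card V = 2 * S.card + (S ∪ F)ᶜ.card := by
    have := Finset.card_add_card_compl (S ∪ F)
    rw [Finset.card_union_of_disjoint hdisj, hFcard] at this
    omega
  have hcompl : ∀ v ∈ (S ∪ F)ᶜ, v ∉ S := by
    intro v hv; rw [Finset.mem_compl, Finset.mem_union] at hv; tauto
  constructor
  · have h2 := key2 _ hcompl
    rw [hsplit]
    have : ((Fintype.card V : ℕ) : ℝ) = 2 * S.card + ((S ∪ F)ᶜ.card : ℝ) := by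
      rw [hcards]; push_cast; ring
    linarith
  · intro heq
    -- first, S = ∅
    have hSempty : S = ∅ := by
      by_contra hne
      obtain ⟨v0, hv0⟩ := Finset.nonempty_of_ne_empty hne
      have hXne : (↑S : Set V).Nonempty := ⟨v0, hv0⟩
      have hsur := h1 ↑S hXne (fun u hu v hv => hSindep u hu v hv)
      rw [Set.ncard_coe_finset] at hsur
      have hNfin : (nbhd G (↑S : Set V)).Finite := Set.toFinite _
      have hFsub : F ⊆ hNfin.toFinset := by
        intro w hw
        simp only [hF, Finset.mem_image] at hw
        obtain ⟨s, _, rfl⟩ := hw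
        rw [Set.Finite.mem_toFinset]
        refine ⟨?_, ↑s, s.2, hfadj s⟩
        intro hmem
        have := hFhalf (f s) (by rw [hF]; exact Finset.mem_image_of_mem f (Finset.mem_attach _ s))
        rw [Finset.mem_coe, hmemS] at hmem; linarith
      have hlt : F.card < hNfin.toFinset.card := by
        rw [← Set.ncard_eq_toFinset_card _ hNfin]
        omega
      obtain ⟨w, hwN, hwF⟩ : ∃ w ∈ hNfin.toFinset, w ∉ F := by
        by_contra hc
        push_neg at hc
        exact absurd (Finset.card_le_card hc) (by omega)
      rw [Set.Finite.mem_toFinset] at hwN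
      obtain ⟨hwX, u, huS, hadj⟩ := hwN
      have hwS : w ∉ S := hwX
      have hwhalf : 1/2 < x w := half_lt_of_adj hx ((hmemS u).1 huS) hadj
      have hwC : w ∈ (S ∪ F)ᶜ := by
        rw [Finset.mem_compl, Finset.mem_union]; tauto
      -- strict bound
      have hsum : ∑ v ∈ (S ∪ F)ᶜ, x v = x w + ∑ v ∈ ((S ∪ F)ᶜ).erase w, x v :=
        (Finset.add_sum_erase _ x hwC).symm
      have hkey := key2 (((S ∪ F)ᶜ).erase w)
        (fun v hv => hcompl v (Finset.mem_of_mem_erase hv))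
      have hce : (S ∪ F)ᶜ.card = (((S ∪ F)ᶜ).erase w).card + 1 :=
        (Finset.card_erase_add_one hwC).symm
      have hcastc : ((Fintype.card V : ℕ) : ℝ)
          = 2 * S.card + ((((S ∪ F)ᶜ).erase w).card + 1 : ℝ) := by
        rw [hcards, hce]; push_cast; ring
      rw [hsplit, hsum] at heq
      linarith
    have hge : ∀ v, 1/2 ≤ x v := by
      intro v
      by_contra hc
      push_neg at hc
      have : v ∈ S := (hmemS v).2 hc
      rw [hSempty] at this; exact absurd this (Finset.notMem_empty v)
    have hzero : ∑ v : V, (x v - 1/2) = 0 := by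
      rw [Finset.sum_sub_distrib]
      have : fvcWeight x = ∑ v : V, x v := rfl
      rw [Finset.sum_const, Finset.card_univ] at *
      rw [← this, heq]
      push_cast; ring
    have := (Finset.sum_eq_zero_iff_of_nonneg
      (fun v _ => sub_nonneg.2 (hge v))).1 hzero
    funext v
    have hv := this v (Finset.mem_univ v)
    simpa [sub_eq_zero] using hv

lemma conv_surplus_one {V : Type} [Fintype V] (G : SimpleGraph V)
    (hA : (∀ x : V → ℝ, IsFVC G x → (Fintype.card V : ℝ) / 2 ≤ fvcWeight x) ∧
      (∀ x : V → ℝ, IsFVC G x → fvcWeight x = (Fintype.card V : ℝ) / 2 →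
        x = fun _ => (1 : ℝ) / 2)) :
    SurplusGE G 1 := by
  intro X hXne hXind
  by_contra hc
  push_neg at hc
  set y : V → ℝ := fun v => if v ∈ X then 0 else if v ∈ nbhd G X then 1 else 1/2 with hy
  have hyv : ∀ v, y v = 0 ∨ y v = 1 ∨ y v = 1/2 := by
    intro v; rw [hy]; dsimp only; split_ifs <;> simp
  have hyFVC : IsFVC G y := by
    constructor
    · intro v; rcases hyv v with h | h | h <;> rw [h] <;> norm_num
    · intro u v hadj
      by_cases hu : u ∈ X
      · have hv : v ∉ X := fun hv => hXind u hu v hv hadj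
        have : y u = 0 := by rw [hy]; simp [hu]
        have hv2 : y v = 1 := by
          rw [hy]; simp only [hv, if_false, if_neg]
          rw [if_pos ⟨hv, u, hu, hadj⟩]
        linarith
      · by_cases hv : v ∈ X
        · have : y v = 0 := by rw [hy]; simp [hv]
          have hu2 : y u = 1 := by
            rw [hy]; simp only [hu, if_false]
            rw [if_pos ⟨hu, v, hv, hadj.symm⟩]
          linarith
        · have h1 : 1/2 ≤ y u := by
            rw [hy]; dsimp only; rw [if_neg hu]; split_ifs <;> norm_num
          have h2 : 1/2 ≤ y v := by
            rw [hy]; dsimp only; rw [if_neg hv]; split_ifs <;> norm_num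
          linarith
  have hXfin : X.Finite := Set.toFinite X
  have hNfin : (nbhd G X).Finite := Set.toFinite _
  set A := hXfin.toFinset with hAdef
  set B := hNfin.toFinset with hBdef
  have hdisj : Disjoint A B := by
    rw [Finset.disjoint_left]
    intro v hv hvB
    rw [hAdef, Set.Finite.mem_toFinset] at hv
    rw [hBdef, Set.Finite.mem_toFinset] at hvB
    exact hvB.1 hv
  have hsumA : ∑ v ∈ A, y v = 0 := by
    apply Finset.sum_eq_zero
    intro v hv
    rw [hAdef, Set.Finite.mem_toFinset] at hv
    rw [hy]; simp [hv]
  have hsumB : ∑ v ∈ B, y v = B.card := by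
    rw [Finset.sum_congr rfl (g := fun _ => (1:ℝ)) ?_, Finset.sum_const, nsmul_eq_mul, mul_one]
    intro v hv
    rw [hBdef, Set.Finite.mem_toFinset] at hv
    rw [hy]; simp only [hv.1, if_false, if_neg]
    rw [if_pos hv]
  have hsumC : ∑ v ∈ (A ∪ B)ᶜ, y v = ((A ∪ B)ᶜ.card : ℝ) / 2 := by
    rw [Finset.sum_congr rfl (g := fun _ => (1/2:ℝ)) ?_, Finset.sum_const, nsmul_eq_mul]
    · ring
    · intro v hv
      rw [Finset.mem_compl, Finset.mem_union] at hv
      push_neg at hv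
      simp only [hAdef, hBdef, Set.Finite.mem_toFinset] at hv
      have h1 : v ∉ X := hv.1
      have h2 : v ∉ nbhd G X := hv.2
      rw [hy]; simp [h1, h2]
  have hsplit : fvcWeight y = (B.card : ℝ) + ((A ∪ B)ᶜ.card : ℝ) / 2 := by
    rw [fvcWeight, ← Finset.sum_add_sum_compl (A ∪ B) y, Finset.sum_union hdisj,
      hsumA, hsumB, hsumC]
    ring
  have hcards : Fintype.card V = A.card + B.card + (A ∪ B)ᶜ.card := by
    have := Finset.card_add_card_compl (A ∪ B)
    rw [Finset.card_union_of_disjoint hdisj] at this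
    omega
  have hAcard : X.ncard = A.card := Set.ncard_eq_toFinset_card _ hXfin
  have hBcard : (nbhd G X).ncard = B.card := Set.ncard_eq_toFinset_card _ hNfin
  have hBA : B.card ≤ A.card := by omega
  have hle : fvcWeight y ≤ (Fintype.card V : ℝ) / 2 := by
    rw [hsplit]
    have : ((Fintype.card V : ℕ) : ℝ) = (A.card : ℝ) + B.card + (A ∪ B)ᶜ.card := by
      rw [hcards]; push_cast; ring
    have hBA' : (B.card : ℝ) ≤ A.card := by exact_mod_cast hBA
    linarith
  have heq : fvcWeight y = (Fintype.card V : ℝ) / 2 := le_antisymm hle (hA.1 y hyFVC)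
  have hhalf := hA.2 y hyFVC heq
  obtain ⟨v0, hv0⟩ := hXne
  have := congrFun hhalf v0
  rw [hy] at this
  simp only [hv0, if_true] at this
  norm_num at this

/-- `surplus(G) ≥ 2` iff all-`1/2` is the unique minimum-weight fractional vertex
cover and no nonempty independent set has surplus exactly one. -/
theorem surplus_ge_two_iff {V : Type} [Fintype V] [Nonempty V] (G : SimpleGraph V) :
    SurplusGE G 2 ↔
      ((∀ x : V → ℝ, IsFVC G x → (Fintype.card V : ℝ) / 2 ≤ fvcWeight x) ∧
        (∀ x : V → ℝ, IsFVC G x → fvcWeight x = (Fintype.card V : ℝ) / 2 →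
          x = fun _ => (1 : ℝ) / 2)) ∧
      ¬ ∃ Z : Set V, Z.Nonempty ∧ IndepSet G Z ∧
        (nbhd G Z).ncard = Z.ncard + 1 := by
  constructor
  · intro h2
    have h1 : SurplusGE G 1 := by
      intro X hn hi
      have := h2 X hn hi
      omega
    refine ⟨⟨fun x hx => (main_bound G h1 x hx).1,
      fun x hx he => (main_bound G h1 x hx).2 he⟩, ?_⟩
    rintro ⟨Z, hZn, hZi, hZeq⟩
    have := h2 Z hZn hZi
    omega
  · rintro ⟨hA, hB⟩
    have h1 := conv_surplus_one G hA
    intro X hn hi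
    have h := h1 X hn hi
    have hne : (nbhd G X).ncard ≠ X.ncard + 1 := fun hc => hB ⟨X, hn, hi, hc⟩
    omega
end
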